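/- arXiv:2406.10005 — 8 statements merged into one kernel-verified Lean document; each statement's English description precedes it below -/
import Mathlib

section
/- (Cordes inequality) If T₁ and T₂ are positive bounded linear operators on a separable Hilbert space and 0 ≤ p ≤ 1, then ‖T₁^p T₂^p‖ ≤ ‖T₁ T₂‖^p. -/
open scoped ENNReal

lemma iSup_nnnorm_diff_zero {𝕜 : Type*} [NormedField 𝕜] (s : Set 𝕜) :
    ⨆ k ∈ s, (‖k‖₊ : ℝ≥0∞) = ⨆ k ∈ s \ {0}, (‖k‖₊ : ℝ≥0∞) := by
  apply le_antisymm
  · refine iSup₂_le fun k hk => ?_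
    by_cases h : k = 0
    · simp [h]
    · exact le_iSup₂ (f := fun k _ => (‖k‖₊ : ℝ≥0∞)) k ⟨hk, h⟩
  · exact iSup₂_le fun k hk => le_iSup₂ (f := fun k _ => (‖k‖₊ : ℝ≥0∞)) k hk.1

lemma spectralRadius_mul_comm {𝕜 A : Type*} [NormedField 𝕜] [Ring A] [Algebra 𝕜 A] (a b : A) :
    spectralRadius 𝕜 (a * b) = spectralRadius 𝕜 (b * a) := by
  rw [spectralRadius, spectralRadius, iSup_nnnorm_diff_zero (spectrum 𝕜 (a*b)),
    iSup_nnnorm_diff_zero (spectrum 𝕜 (b*a)), spectrum.nonzero_mul_comm]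

section CStar
variable {A : Type*} [CStarAlgebra A] [PartialOrder A] [StarOrderedRing A] [NormOneClass A]

noncomputable def pw (T : A) (p : ℝ) : A := cfc (fun x : ℝ => x ^ p) T

lemma pw_nonneg {T : A} (p : ℝ) (hT : 0 ≤ T) : 0 ≤ pw T p :=
  cfc_nonneg fun x hx => Real.rpow_nonneg (spectrum_nonneg_of_nonneg hT hx) p

lemma pw_sa {T : A} (p : ℝ) (hT : 0 ≤ T) : IsSelfAdjoint (pw T p) :=
  (pw_nonneg p hT).isSelfAdjoint

lemma pw_add {T : A} {p q : ℝ} (hp : 0 ≤ p) (hq : 0 ≤ q) (hT : 0 ≤ T) :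
    pw T (p + q) = pw T p * pw T q := by
  rw [pw, pw, pw, ← cfc_mul _ _ T]
  apply cfc_congr
  intro x hx
  exact Real.rpow_add_of_nonneg (spectrum_nonneg_of_nonneg hT hx) hp hq

lemma pw_zero (T : A) (hT : IsSelfAdjoint T) : pw T 0 = 1 := by
  rw [pw]
  simp only [Real.rpow_zero]
  exact cfc_const_one ℝ T

lemma pw_one (T : A) (hT : IsSelfAdjoint T) : pw T 1 = T := by
  rw [pw]
  simp only [Real.rpow_one]
  exact cfc_id ℝ T

set_option linter.unusedSectionVars false
set_option linter.unusedVariables false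

lemma norm_swap {a b : A} (ha : 0 ≤ a) (hb : 0 ≤ b) (p : ℝ) :
    ‖pw b p * pw a p‖ = ‖pw a p * pw b p‖ := by
  rw [← norm_star (pw a p * pw b p), star_mul, (pw_sa p ha).star_eq, (pw_sa p hb).star_eq]

lemma key_sq {a b : A} (ha : 0 ≤ a) (hb : 0 ≤ b) {p q : ℝ} (hp : 0 ≤ p) (hq : 0 ≤ q) :
    ‖pw a ((p+q)/2) * pw b ((p+q)/2)‖ ^ 2 ≤ ‖pw a p * pw b p‖ * ‖pw a q * pw b q‖ := by
  set m := (p+q)/2 with hm_def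
  have hm : 0 ≤ m := by positivity
  have hm2 : m + m = p + q := by rw [hm_def]; ring
  set am := pw a m
  set bm := pw b m
  have hsq : ‖am * bm‖ ^ 2 = ‖bm * pw a (p+q) * bm‖ := by
    rw [sq, ← CStarRing.norm_star_mul_self, star_mul, (pw_sa m ha).star_eq,
      (pw_sa m hb).star_eq]
    congr 1
    have : pw a (p+q) = am * am := by rw [← hm2, pw_add hm hm ha]
    rw [this]
    noncomm_ring
  have hYnn : 0 ≤ bm * pw a (p+q) * bm := by
    have := star_right_conjugate_nonneg (pw_nonneg (p+q) ha) bm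
    rwa [(pw_sa m hb).star_eq] at this
  -- spectral radius computations
  have hr1 : spectralRadius ℂ (bm * pw a (p+q) * bm)
      = spectralRadius ℂ (pw a (p+q) * pw b (p+q)) := by
    rw [mul_assoc, spectralRadius_mul_comm, mul_assoc]
    congr 1
    rw [← hm2, pw_add hm hm hb]
  have hr2 : spectralRadius ℂ (pw a (p+q) * pw b (p+q))
      = spectralRadius ℂ ((pw a q * pw b q) * (pw b p * pw a p)) := by
    have e1 : pw a (p+q) * pw b (p+q) = pw a p * ((pw a q * pw b q) * pw b p) := by
      rw [pw_add hp hq ha, add_comm p q, pw_add hq hp hb]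
      noncomm_ring
    rw [e1, spectralRadius_mul_comm]
    noncomm_ring
  have hle : (‖bm * pw a (p+q) * bm‖₊ : ℝ≥0∞)
      ≤ (‖pw a q * pw b q‖₊ : ℝ≥0∞) * (‖pw b p * pw a p‖₊ : ℝ≥0∞) := by
    rw [← hYnn.isSelfAdjoint.spectralRadius_eq_nnnorm, hr1, hr2]
    refine (spectrum.spectralRadius_le_nnnorm (𝕜 := ℂ) _).trans ?_
    exact_mod_cast nnnorm_mul_le _ _
  have hle' : ‖bm * pw a (p+q) * bm‖ ≤ ‖pw a q * pw b q‖ * ‖pw b p * pw a p‖ := by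
    rw [← ENNReal.coe_mul, ENNReal.coe_le_coe] at hle
    exact_mod_cast hle
  rw [hsq]
  calc ‖bm * pw a (p+q) * bm‖ ≤ ‖pw a q * pw b q‖ * ‖pw b p * pw a p‖ := hle'
    _ = ‖pw a p * pw b p‖ * ‖pw a q * pw b q‖ := by rw [norm_swap ha hb, mul_comm]


lemma dyadic {a b : A} (ha : 0 ≤ a) (hb : 0 ≤ b) :
    ∀ n k : ℕ, k ≤ 2^n →
      ‖pw a ((k:ℝ)/2^n) * pw b ((k:ℝ)/2^n)‖ ≤ ‖a * b‖ ^ ((k:ℝ)/2^n) := by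
  intro n
  induction n with
  | zero =>
    intro k hk
    interval_cases k
    · simp [pw_zero a ha.isSelfAdjoint, pw_zero b hb.isSelfAdjoint]
    · simp [pw_one a ha.isSelfAdjoint, pw_one b hb.isSelfAdjoint]
  | succ n ih =>
    intro k hk
    have h2 : (2:ℕ)^(n+1) = 2 * 2^n := by ring
    rcases Nat.even_or_odd k with ⟨j, hj⟩ | ⟨j, hj⟩
    · have hjle : j ≤ 2^n := by omega
      have e : (k:ℝ)/2^(n+1) = (j:ℝ)/2^n := by
        subst hj; push_cast; ring
      rw [e]
      exact ih j hjle
    · have hjle : j + 1 ≤ 2^n := by omega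
      set p := (j:ℝ)/2^n with hp_def
      set q := ((j:ℝ)+1)/2^n with hq_def
      have hp0 : 0 ≤ p := by positivity
      have hq0 : 0 ≤ q := by positivity
      have e : (k:ℝ)/2^(n+1) = (p + q)/2 := by
        subst hj; rw [hp_def, hq_def]; push_cast; ring
      have h1 : ‖pw a p * pw b p‖ ≤ ‖a * b‖ ^ p := ih j (by omega)
      have h2' : ‖pw a q * pw b q‖ ≤ ‖a * b‖ ^ q := by
        have := ih (j+1) hjle
        push_cast at this
        exact this
      have hC : (0:ℝ) ≤ ‖a * b‖ := norm_nonneg _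
      have hm0 : 0 ≤ (p+q)/2 := by positivity
      rw [e]
      refine le_of_pow_le_pow_left₀ (by norm_num) (Real.rpow_nonneg hC _) (n := 2) ?_
      calc ‖pw a ((p+q)/2) * pw b ((p+q)/2)‖^2
          ≤ ‖pw a p * pw b p‖ * ‖pw a q * pw b q‖ := key_sq ha hb hp0 hq0
        _ ≤ ‖a * b‖^p * ‖a * b‖^q :=
            mul_le_mul h1 h2' (norm_nonneg _) (Real.rpow_nonneg hC _)
        _ = (‖a * b‖^((p+q)/2))^2 := by
            rw [← Real.rpow_add_of_nonneg hC hp0 hq0, sq,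
              ← Real.rpow_add_of_nonneg hC hm0 hm0]
            congr 1
            ring

open Filter in
lemma pw_tendsto {T : A} (hT : 0 ≤ T) {p : ℝ} (hp : 0 < p) {u : ℕ → ℝ}
    (hu : Tendsto u atTop (nhds p)) :
    Tendsto (fun n => pw T (u n)) atTop (nhds (pw T p)) := by
  have hσ : ∀ x ∈ spectrum ℝ T, x ∈ Set.Icc (0:ℝ) ‖T‖ := by
    intro x hx
    refine ⟨spectrum_nonneg_of_nonneg hT hx, ?_⟩
    have := spectrum.norm_le_norm_of_mem hx
    rwa [Real.norm_eq_abs, abs_of_nonneg (spectrum_nonneg_of_nonneg hT hx)] at this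
  rw [Metric.tendsto_atTop]
  intro ε hε
  -- uniform continuity of rpow on a compact set
  have hK : IsCompact (Set.Icc (0:ℝ) ‖T‖ ×ˢ Set.Icc (p/2) (2*p)) :=
    isCompact_Icc.prod isCompact_Icc
  have hcont : ContinuousOn (fun z : ℝ × ℝ => z.1 ^ z.2)
      (Set.Icc (0:ℝ) ‖T‖ ×ˢ Set.Icc (p/2) (2*p)) := by
    intro z hz
    have hz2 : 0 < z.2 := lt_of_lt_of_le (by positivity) hz.2.1
    exact (Real.continuousAt_rpow z (Or.inr hz2)).continuousWithinAt
  have huc := hK.uniformContinuousOn_of_continuous hcont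
  rw [Metric.uniformContinuousOn_iff] at huc
  obtain ⟨δ, hδpos, hδ⟩ := huc (ε/2) (half_pos hε)
  obtain ⟨N, hN⟩ := (Metric.tendsto_atTop.mp hu) (min δ (p/2)) (lt_min hδpos (half_pos hp))
  refine ⟨N, fun n hn => ?_⟩
  have hun := hN n hn
  rw [Real.dist_eq] at hun
  have hun1 : p/2 < u n := by
    have := abs_lt.mp (lt_of_lt_of_le hun (min_le_right _ _))
    linarith [this.1]
  have hun2 : u n < 2*p := by
    have := abs_lt.mp (lt_of_lt_of_le hun (min_le_right _ _))
    linarith [this.2]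
  have hun0 : 0 ≤ u n := le_of_lt (lt_of_le_of_lt (by positivity) hun1)
  have hsub : pw T (u n) - pw T p = cfc (fun x : ℝ => x ^ (u n) - x ^ p) T := by
    rw [pw, pw, ← cfc_sub _ _ T
      (fun x _ => (Real.continuousAt_rpow_const x (u n) (Or.inr hun0)).continuousWithinAt)
      (fun x _ => (Real.continuousAt_rpow_const x p (Or.inr hp.le)).continuousWithinAt)]
  rw [dist_eq_norm, hsub]
  have hbound : ∀ x ∈ spectrum ℝ T, ‖x ^ (u n) - x ^ p‖ ≤ ε/2 := by
    intro x hx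
    have hx' := hσ x hx
    have hz1 : (x, u n) ∈ Set.Icc (0:ℝ) ‖T‖ ×ˢ Set.Icc (p/2) (2*p) :=
      ⟨hx', hun1.le, hun2.le⟩
    have hz2 : (x, p) ∈ Set.Icc (0:ℝ) ‖T‖ ×ˢ Set.Icc (p/2) (2*p) :=
      ⟨hx', by constructor <;> linarith⟩
    have hdist : dist ((x, u n) : ℝ × ℝ) (x, p) < δ := by
      rw [Prod.dist_eq]
      simp only [dist_self]
      refine max_lt (by positivity) ?_
      rw [Real.dist_eq]
      exact lt_of_lt_of_le hun (min_le_left _ _)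
    have := hδ _ hz1 _ hz2 hdist
    rw [Real.dist_eq] at this
    rw [Real.norm_eq_abs]
    exact le_of_lt this
  calc ‖cfc (fun x : ℝ => x ^ (u n) - x ^ p) T‖ ≤ ε/2 :=
        norm_cfc_le (by positivity) hbound
    _ < ε := by linarith
end CStar


/-- Cordes inequality: if `T₁, T₂` are positive bounded linear operators on a separable
Hilbert space and `0 ≤ p ≤ 1`, then `‖T₁^p T₂^p‖ ≤ ‖T₁ T₂‖^p`, where the powers are taken
via the continuous functional calculus. -/
theorem stmt_3 {H : Type*} [NormedAddCommGroup H] [InnerProductSpace ℂ H] [CompleteSpace H]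
    [TopologicalSpace.SeparableSpace H]
    (T₁ T₂ : H →L[ℂ] H) (h₁ : T₁.IsPositive) (h₂ : T₂.IsPositive)
    (p : ℝ) (hp0 : 0 ≤ p) (hp1 : p ≤ 1) :
    ‖cfc (fun x : ℝ => x ^ p) T₁ * cfc (fun x : ℝ => x ^ p) T₂‖ ≤ ‖T₁ * T₂‖ ^ p := by
  rcases subsingleton_or_nontrivial H with hH | hH
  · rw [Subsingleton.elim (cfc (fun x : ℝ => x ^ p) T₁ * cfc (fun x : ℝ => x ^ p) T₂) 0,
      norm_zero]
    exact Real.rpow_nonneg (norm_nonneg _) p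
  · have ha : 0 ≤ T₁ := (ContinuousLinearMap.nonneg_iff_isPositive T₁).mpr h₁
    have hb : 0 ≤ T₂ := (ContinuousLinearMap.nonneg_iff_isPositive T₂).mpr h₂
    show ‖pw T₁ p * pw T₂ p‖ ≤ ‖T₁ * T₂‖ ^ p
    rcases hp0.eq_or_lt with rfl | hp
    · rw [pw_zero _ ha.isSelfAdjoint, pw_zero _ hb.isSelfAdjoint, Real.rpow_zero, one_mul,
        norm_one]
    · set u : ℕ → ℝ := fun n => (⌊p * 2^n⌋₊ : ℝ)/2^n with hu_def
      have h2pos : ∀ n : ℕ, (0:ℝ) < 2^n := fun n => by positivity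
      have hk : ∀ n, ⌊p * 2^n⌋₊ ≤ 2^n := by
        intro n
        have h1 : p * 2^n ≤ ((2^n : ℕ) : ℝ) := by
          push_cast
          nlinarith [h2pos n]
        calc ⌊p * 2^n⌋₊ ≤ ⌊((2^n : ℕ) : ℝ)⌋₊ := Nat.floor_mono h1
          _ = 2^n := Nat.floor_natCast _
      have hdy : ∀ n, ‖pw T₁ (u n) * pw T₂ (u n)‖ ≤ ‖T₁ * T₂‖ ^ (u n) :=
        fun n => dyadic ha hb n _ (hk n)
      have hlow : ∀ n, p - (1/2:ℝ)^n ≤ u n := by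
        intro n
        show p - (1/2:ℝ)^n ≤ (⌊p * 2^n⌋₊ : ℝ)/2^n
        rw [le_div_iff₀ (h2pos n)]
        have hfl := Nat.lt_floor_add_one (p * 2^n)
        have e : (p - (1/2:ℝ)^n) * 2^n = p * 2^n - 1 := by
          rw [sub_mul]
          congr 1
          rw [← mul_pow]
          norm_num
        rw [e]
        linarith
      have hhigh : ∀ n, u n ≤ p := by
        intro n
        show (⌊p * 2^n⌋₊ : ℝ)/2^n ≤ p
        rw [div_le_iff₀ (h2pos n)]
        exact Nat.floor_le (by positivity)
      have hu : Filter.Tendsto u Filter.atTop (nhds p) := by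
        have h0 : Filter.Tendsto (fun n : ℕ => p - (1/2:ℝ)^n) Filter.atTop (nhds p) := by
          have := tendsto_pow_atTop_nhds_zero_of_lt_one (by norm_num : (0:ℝ) ≤ 1/2)
            (by norm_num : (1/2:ℝ) < 1)
          simpa using tendsto_const_nhds.sub this
        exact tendsto_of_tendsto_of_tendsto_of_le_of_le h0 tendsto_const_nhds hlow hhigh
      have hL : Filter.Tendsto (fun n => ‖pw T₁ (u n) * pw T₂ (u n)‖) Filter.atTop
          (nhds ‖pw T₁ p * pw T₂ p‖) :=
        ((pw_tendsto ha hp hu).mul (pw_tendsto hb hp hu)).norm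
      have hR : Filter.Tendsto (fun n => ‖T₁ * T₂‖ ^ (u n)) Filter.atTop (nhds (‖T₁ * T₂‖ ^ p)) := by
        have hc : ContinuousAt (fun z : ℝ × ℝ => z.1 ^ z.2) (‖T₁ * T₂‖, p) :=
          Real.continuousAt_rpow _ (Or.inr hp)
        exact hc.tendsto.comp (tendsto_const_nhds.prodMk_nhds hu)
      exact le_of_tendsto_of_tendsto' hL hR hdy
end

section
/- For any 0 < α ≤ β and every λ > 0, sup over positive integers i of i^{-α}/(i^{-β} + λ) is at most λ^{(α−β)/β}. -/
/-- For any `0 < α ≤ β` and every `λ > 0`,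
`sup_{i ≥ 1} i^{-α}/(i^{-β} + λ) ≤ λ^{(α-β)/β}` (stated pointwise, which is
equivalent to the bound on the supremum). -/
theorem stmt_4 (α β lam : ℝ) (hα : 0 < α) (hαβ : α ≤ β) (hlam : 0 < lam) :
    ∀ i : ℕ, 1 ≤ i →
      (i : ℝ) ^ (-α) / ((i : ℝ) ^ (-β) + lam) ≤ lam ^ ((α - β) / β) := by
  intro i hi
  have hβ : 0 < β := lt_of_lt_of_le hα hαβ
  have hi' : (0 : ℝ) < i := by
    have : (1 : ℝ) ≤ i := by exact_mod_cast hi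
    linarith
  set x := (i : ℝ) ^ (-β) with hx
  have hx0 : 0 < x := Real.rpow_pos_of_pos hi' _
  have hiα : (i : ℝ) ^ (-α) = x ^ (α / β) := by
    rw [hx, ← Real.rpow_mul (Nat.cast_nonneg i)]
    congr 1
    field_simp
  have hexp : (α - β) / β = α / β - 1 := by
    rw [sub_div, div_self hβ.ne']
  rw [hiα, hexp]
  rcases le_total x lam with h | h
  · have : lam ^ (α / β - 1) = lam ^ (α / β) / lam := by
      rw [Real.rpow_sub hlam, Real.rpow_one]
    rw [this]
    exact div_le_div₀ (Real.rpow_nonneg hlam.le _)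
      (Real.rpow_le_rpow hx0.le h (by positivity)) hlam (by linarith)
  · have h1 : x ^ (α / β) / (x + lam) ≤ x ^ (α / β) / x := by
      apply div_le_div_of_nonneg_left (Real.rpow_nonneg hx0.le _) hx0 (by linarith)
    calc x ^ (α / β) / (x + lam) ≤ x ^ (α / β) / x := h1
      _ = x ^ (α / β - 1) := by rw [Real.rpow_sub hx0, Real.rpow_one]
      _ ≤ lam ^ (α / β - 1) := Real.rpow_le_rpow_of_nonpos hlam h (by
          rw [sub_nonpos]
          exact (div_le_one hβ).mpr hαβ)
end

section
/- Let a, m, p, q, l be positive reals with a < p, and set r = min{p, lq/m + a}. Then for every λ > 0, sup over positive integers i of i^{-(p−a)m} / (i^{-q} + λ)^l is at most λ^{((r−a)m − q l)/q}. -/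
/-- Let `a, m, p, q, l > 0` with `a < p` and `r = min {p, lq/m + a}`. Then for every `λ > 0`,
`sup_{i ≥ 1} i^{-(p-a)m}/(i^{-q}+λ)^l ≤ λ^{((r-a)m - ql)/q}` (stated pointwise). -/
theorem stmt_5 (a m p q l lam : ℝ) (ha : 0 < a) (hm : 0 < m) (hp : 0 < p) (hq : 0 < q)
    (hl : 0 < l) (hap : a < p) (hlam : 0 < lam) :
    ∀ i : ℕ, 1 ≤ i →
      (i : ℝ) ^ (-((p - a) * m)) / ((i : ℝ) ^ (-q) + lam) ^ l
        ≤ lam ^ (((min p (l * q / m + a) - a) * m - q * l) / q) := by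
  intro i hi
  have hx : (1:ℝ) ≤ (i:ℝ) := by exact_mod_cast hi
  have hx0 : (0:ℝ) < (i:ℝ) := lt_of_lt_of_le one_pos hx
  set r := min p (l * q / m + a) with hrdef
  have har : a < r := lt_min hap (by linarith [div_pos (mul_pos hl hq) hm])
  have hrp : r ≤ p := min_le_left _ _
  set θ := (r - a) * m / (q * l) with hθdef
  have hθ0 : 0 < θ := div_pos (by nlinarith) (by positivity)
  have hram : (r - a) * m ≤ q * l := by
    have h3 : r - a ≤ l * q / m := by
      have := min_le_right p (l*q/m+a); linarith
    have h4 := mul_le_mul_of_nonneg_right h3 hm.le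
    rw [div_mul_cancel₀ _ hm.ne'] at h4
    linarith
  have hθ1 : θ ≤ 1 := by
    rw [hθdef, div_le_one (by positivity)]; exact hram
  set t := (i:ℝ) ^ (-q) with htdef
  have ht0 : 0 < t := Real.rpow_pos_of_pos hx0 _
  have htl0 : 0 < t + lam := by linarith
  -- AM-GM
  have amgm : t ^ θ * lam ^ (1 - θ) ≤ θ * t + (1 - θ) * lam :=
    Real.geom_mean_le_arith_mean2_weighted hθ0.le (by linarith) ht0.le hlam.le (by ring)
  have hC : t ^ θ ≤ (t + lam) * lam ^ (θ - 1) := by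
    have h5 : t ^ θ * lam ^ (1 - θ) ≤ t + lam := by nlinarith [hθ0.le, ht0.le, hlam.le]
    have h6 := mul_le_mul_of_nonneg_right h5 (Real.rpow_nonneg hlam.le (θ - 1))
    calc t ^ θ = t ^ θ * lam ^ (1 - θ) * lam ^ (θ - 1) := by
          rw [mul_assoc, ← Real.rpow_add hlam]
          norm_num
      _ ≤ (t + lam) * lam ^ (θ - 1) := h6
  have hD : (t ^ θ) ^ l ≤ ((t + lam) * lam ^ (θ - 1)) ^ l :=
    Real.rpow_le_rpow (Real.rpow_nonneg ht0.le _) hC hl.le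
  have hB : (i:ℝ) ^ (-((r - a) * m)) = (t ^ θ) ^ l := by
    rw [htdef, ← Real.rpow_mul hx0.le, ← Real.rpow_mul hx0.le]
    congr 1
    rw [hθdef]
    field_simp
  have hA : (i:ℝ) ^ (-((p - a) * m)) ≤ (i:ℝ) ^ (-((r - a) * m)) :=
    Real.rpow_le_rpow_of_exponent_le hx (by nlinarith)
  have hE : ((t + lam) * lam ^ (θ - 1)) ^ l
      = lam ^ (((r - a) * m - q * l) / q) * (t + lam) ^ l := by
    rw [Real.mul_rpow htl0.le (Real.rpow_nonneg hlam.le _), ← Real.rpow_mul hlam.le,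
      mul_comm]
    congr 2
    rw [hθdef]
    field_simp
  rw [div_le_iff₀ (Real.rpow_pos_of_pos htl0 l)]
  exact le_trans hA (by rw [hB]; exact le_trans hD (le_of_eq hE))
end

section
/- For α > 1, β > 1 and q ≥ α/β there is a constant c (depending only on α, β, q) such that for all λ > 0, Σ_{i=1}^∞ i^{-α}/(i^{-β} + λ)^q ≤ c · λ^{-(1 + βq − α)/β}. -/
open Finset

-- MVT inequality
lemma aux_mvt {α : ℝ} (hα : 1 < α) {x : ℝ} (hx : 1 ≤ x) :
    (α - 1) * (x + 1) ^ (-α) ≤ x ^ (1 - α) - (x + 1) ^ (1 - α) := by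
  have hx0 : (0:ℝ) < x := by linarith
  have hcont : ContinuousOn (fun t : ℝ => t ^ (1 - α)) (Set.Icc x (x + 1)) := by
    apply ContinuousOn.rpow_const continuousOn_id
    intro t ht
    exact Or.inl (by rcases ht with ⟨h1, _⟩; simp only [id]; intro h; rw [h] at h1; linarith)
  have hder : ∀ t ∈ Set.Ioo x (x + 1),
      HasDerivAt (fun t : ℝ => t ^ (1 - α)) ((1 - α) * t ^ (-α)) t := by
    intro t ht
    have := Real.hasDerivAt_rpow_const (x := t) (p := 1 - α)
      (Or.inl (by rcases ht with ⟨h1, _⟩; intro h; rw [h] at h1; linarith))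
    convert this using 2
    ring_nf
  obtain ⟨c, hc, hceq⟩ := exists_hasDerivAt_eq_slope (fun t : ℝ => t ^ (1 - α))
    (fun t => (1 - α) * t ^ (-α)) (by linarith) hcont hder
  have hc0 : 0 < c := by rcases hc with ⟨h1, _⟩; linarith
  have hslope : (1 - α) * c ^ (-α) = (x + 1) ^ (1 - α) - x ^ (1 - α) := by
    rw [hceq]; ring_nf
  have hmono : (x + 1) ^ (-α) ≤ c ^ (-α) :=
    Real.rpow_le_rpow_of_nonpos hc0 (le_of_lt hc.2) (by linarith)
  nlinarith [hmono, hslope]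


lemma aux_summable {α : ℝ} (hα : 1 < α) :
    Summable (fun i : ℕ => ((i : ℝ) + 1) ^ (-α)) := by
  have h := Real.summable_nat_rpow.mpr (show -α < -1 by linarith)
  have h2 := (summable_nat_add_iff 1).mpr h
  convert h2 using 2 with i
  · rfl
  push_cast
  ring_nf

-- tail bound: sum_{i} (N+i+1)^(-α) ≤ N^(1-α)/(α-1), N ≥ 1
lemma aux_tail {α : ℝ} (hα : 1 < α) {N : ℕ} (hN : 1 ≤ N) :
    ∑' i : ℕ, (((i + N : ℕ) : ℝ) + 1) ^ (-α) ≤ (N : ℝ) ^ (1 - α) / (α - 1) := by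
  have hα1 : (0:ℝ) < α - 1 := by linarith
  set g : ℕ → ℝ := fun i => ((i + N : ℕ) : ℝ) ^ (1 - α) with hg
  apply Real.tsum_le_of_sum_range_le
    (fun n => Real.rpow_nonneg (by positivity) _)
  intro n
  have hstep : ∀ i : ℕ, (((i + N : ℕ) : ℝ) + 1) ^ (-α) ≤ (g i - g (i + 1)) / (α - 1) := by
    intro i
    have hx : (1:ℝ) ≤ ((i + N : ℕ) : ℝ) := by
      have : 1 ≤ i + N := le_add_of_le_right hN
      exact_mod_cast this
    have := aux_mvt hα hx
    rw [le_div_iff₀ hα1]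
    have hcast : ((i + 1 + N : ℕ) : ℝ) = ((i + N : ℕ) : ℝ) + 1 := by push_cast; ring
    simp only [hg, hcast]
    nlinarith [this]
  calc ∑ i ∈ range n, (((i + N : ℕ) : ℝ) + 1) ^ (-α)
      ≤ ∑ i ∈ range n, (g i - g (i + 1)) / (α - 1) := Finset.sum_le_sum fun i _ => hstep i
    _ = (g 0 - g n) / (α - 1) := by rw [← Finset.sum_div, Finset.sum_range_sub' g]
    _ ≤ g 0 / (α - 1) := by
        have hgn : 0 ≤ g n := Real.rpow_nonneg (by positivity) _
        gcongr
        linarith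
    _ = (N : ℝ) ^ (1 - α) / (α - 1) := by simp [hg]

/-- For `α > 1`, `β > 1` and `q ≥ α/β` there is a constant `c > 0` (depending only on
`α, β, q`) such that for all `λ > 0`,
`Σ_{i=1}^∞ i^{-α}/(i^{-β} + λ)^q ≤ c · λ^{-(1 + βq − α)/β}`. -/
theorem stmt_6 (α β q : ℝ) (hα : 1 < α) (hβ : 1 < β) (hq : α / β ≤ q) :
    ∃ c : ℝ, 0 < c ∧ ∀ lam : ℝ, 0 < lam →
      ∑' i : ℕ, ((i : ℝ) + 1) ^ (-α) / (((i : ℝ) + 1) ^ (-β) + lam) ^ q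
        ≤ c * lam ^ (-((1 + β * q - α) / β)) := by
  have hβ0 : (0:ℝ) < β := by linarith
  have hα0 : (0:ℝ) < α := by linarith
  have hα1 : (0:ℝ) < α - 1 := by linarith
  have hq0 : 0 < q := lt_of_lt_of_le (div_pos hα0 hβ0) hq
  have hβq : α ≤ β * q := by
    rw [div_le_iff₀ hβ0] at hq; linarith
  set θ : ℝ := (1 + β * q - α) / β with hθdef
  have hθ0 : 0 < θ := div_pos (by linarith) hβ0
  have hβθ : β * θ = 1 + β * q - α := by
    rw [hθdef]; field_simp
  have hθq : θ ≤ q := by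
    rw [hθdef, div_le_iff₀ hβ0]; nlinarith
  set S : ℝ := ∑' i : ℕ, ((i : ℝ) + 1) ^ (-α) with hSdef
  have hS0 : 0 ≤ S := tsum_nonneg fun i => Real.rpow_nonneg (by positivity) _
  have hsumA : Summable (fun i : ℕ => ((i : ℝ) + 1) ^ (-α)) := aux_summable hα
  have h2nn : (0:ℝ) ≤ 2 ^ (β * θ) := Real.rpow_nonneg (by norm_num) _
  have h3nn : (0:ℝ) < 1 / (α - 1) := by positivity
  refine ⟨S + 2 ^ (β * θ) + 1 / (α - 1) + 1, by linarith, ?_⟩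
  intro lam hlam
  set f : ℕ → ℝ := fun i => ((i : ℝ) + 1) ^ (-α) / (((i : ℝ) + 1) ^ (-β) + lam) ^ q with hf
  have hden : ∀ i : ℕ, (0:ℝ) < ((i : ℝ) + 1) ^ (-β) + lam := fun i => by positivity
  have hf_le_lam : ∀ i : ℕ, f i ≤ lam ^ (-q) * (((i : ℝ) + 1) ^ (-α)) := by
    intro i
    have hb : lam ^ q ≤ (((i : ℝ) + 1) ^ (-β) + lam) ^ q :=
      Real.rpow_le_rpow hlam.le (le_add_of_nonneg_left (Real.rpow_nonneg (by positivity) _))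
        hq0.le
    have h1 : f i ≤ ((i : ℝ) + 1) ^ (-α) / lam ^ q :=
      div_le_div_of_nonneg_left (Real.rpow_nonneg (by positivity) _)
        (Real.rpow_pos_of_pos hlam _) hb
    calc f i ≤ ((i : ℝ) + 1) ^ (-α) / lam ^ q := h1
      _ = lam ^ (-q) * (((i : ℝ) + 1) ^ (-α)) := by
          rw [Real.rpow_neg hlam.le]; ring
  have hfnn : ∀ i : ℕ, 0 ≤ f i := fun i => by
    apply div_nonneg (Real.rpow_nonneg (by positivity) _) (Real.rpow_nonneg (hden i).le _)
  have hfs : Summable f :=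
    Summable.of_nonneg_of_le hfnn hf_le_lam (hsumA.mul_left _)
  have hlamθ : (0:ℝ) < lam ^ (-θ) := Real.rpow_pos_of_pos hlam _
  rcases le_or_gt 1 lam with h1 | h1
  · -- large lambda
    calc ∑' i : ℕ, f i ≤ ∑' i : ℕ, lam ^ (-q) * (((i : ℝ) + 1) ^ (-α)) :=
          Summable.tsum_le_tsum hf_le_lam hfs (hsumA.mul_left _)
      _ = lam ^ (-q) * S := tsum_mul_left
      _ ≤ lam ^ (-θ) * S := by
          apply mul_le_mul_of_nonneg_right ?_ hS0
          exact Real.rpow_le_rpow_of_exponent_le h1 (by linarith)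
      _ ≤ (S + 2 ^ (β * θ) + 1 / (α - 1) + 1) * lam ^ (-θ) := by
          rw [mul_comm]
          apply mul_le_mul_of_nonneg_right ?_ hlamθ.le
          linarith
  · -- small lambda
    set N : ℕ := ⌈lam ^ (-1 / β)⌉₊ with hNdef
    have hxpos : (0:ℝ) < lam ^ (-1 / β) := Real.rpow_pos_of_pos hlam _
    have hx1 : 1 < lam ^ (-1 / β) :=
      (Real.one_lt_rpow_iff_of_pos hlam).mpr
        (Or.inr ⟨h1, div_neg_of_neg_of_pos (by norm_num) hβ0⟩)
    have hN1 : 1 ≤ N := Nat.one_le_ceil_iff.mpr hxpos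
    have hNge : lam ^ (-1 / β) ≤ (N : ℝ) := Nat.le_ceil _
    have hNpos : (0:ℝ) < (N : ℝ) := by exact_mod_cast Nat.lt_of_lt_of_le Nat.zero_lt_one hN1
    have hNle : (N : ℝ) ≤ 2 * lam ^ (-1 / β) := by
      have hceil : ((N : ℕ) : ℝ) < lam ^ (-1 / β) + 1 := Nat.ceil_lt_add_one hxpos.le
      linarith
    rw [← hfs.sum_add_tsum_nat_add N]
    have hhead : ∑ i ∈ Finset.range N, f i ≤ 2 ^ (β * θ) * lam ^ (-θ) := by
      have hterm : ∀ i ∈ Finset.range N, f i ≤ (N : ℝ) ^ (β * q - α) := by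
        intro i hi
        have hi1 : (0:ℝ) < (i : ℝ) + 1 := by positivity
        have hiN : (i : ℝ) + 1 ≤ (N : ℝ) := by
          have := Finset.mem_range.mp hi
          exact_mod_cast Nat.succ_le_of_lt this
        have hb : (((i : ℝ) + 1) ^ (-β)) ^ q ≤ (((i : ℝ) + 1) ^ (-β) + lam) ^ q :=
          Real.rpow_le_rpow (Real.rpow_nonneg hi1.le _)
            (le_add_of_nonneg_right hlam.le) hq0.le
        have hstep1 : f i ≤ ((i : ℝ) + 1) ^ (-α) / (((i : ℝ) + 1) ^ (-β)) ^ q :=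
          div_le_div_of_nonneg_left (Real.rpow_nonneg hi1.le _)
            (Real.rpow_pos_of_pos (Real.rpow_pos_of_pos hi1 _) _) hb
        have hstep2 : ((i : ℝ) + 1) ^ (-α) / (((i : ℝ) + 1) ^ (-β)) ^ q
            = ((i : ℝ) + 1) ^ (β * q - α) := by
          rw [← Real.rpow_mul hi1.le, ← Real.rpow_sub hi1]
          congr 1; ring
        have hstep3 : ((i : ℝ) + 1) ^ (β * q - α) ≤ (N : ℝ) ^ (β * q - α) :=
          Real.rpow_le_rpow hi1.le hiN (by linarith)
        rw [hstep2] at hstep1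
        exact hstep1.trans hstep3
      calc ∑ i ∈ Finset.range N, f i ≤ ∑ _i ∈ Finset.range N, (N : ℝ) ^ (β * q - α) :=
            Finset.sum_le_sum hterm
        _ = (N : ℝ) * (N : ℝ) ^ (β * q - α) := by
            rw [Finset.sum_const, Finset.card_range, nsmul_eq_mul]
        _ = (N : ℝ) ^ (β * θ) := by
            rw [hβθ, show (1:ℝ) + β * q - α = 1 + (β * q - α) by ring,
              Real.rpow_add hNpos, Real.rpow_one]
        _ ≤ (2 * lam ^ (-1 / β)) ^ (β * θ) :=
            Real.rpow_le_rpow hNpos.le hNle (mul_nonneg hβ0.le hθ0.le)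
        _ = 2 ^ (β * θ) * lam ^ (-θ) := by
            rw [Real.mul_rpow (by norm_num) hxpos.le, ← Real.rpow_mul hlam.le]
            congr 1
            rw [hθdef]
            field_simp
    have hsum_tail : Summable (fun i : ℕ => f (i + N)) := (summable_nat_add_iff N).mpr hfs
    have hsumA_tail : Summable (fun i : ℕ => (((i + N : ℕ) : ℝ) + 1) ^ (-α)) :=
      (summable_nat_add_iff N).mpr hsumA
    have htail : ∑' i : ℕ, f (i + N) ≤ 1 / (α - 1) * lam ^ (-θ) := by
      calc ∑' i : ℕ, f (i + N)
          ≤ ∑' i : ℕ, lam ^ (-q) * ((((i + N : ℕ) : ℝ) + 1) ^ (-α)) :=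
            Summable.tsum_le_tsum (fun i => hf_le_lam (i + N)) hsum_tail (hsumA_tail.mul_left _)
        _ = lam ^ (-q) * ∑' i : ℕ, (((i + N : ℕ) : ℝ) + 1) ^ (-α) := tsum_mul_left
        _ ≤ lam ^ (-q) * ((N : ℝ) ^ (1 - α) / (α - 1)) :=
            mul_le_mul_of_nonneg_left (aux_tail hα hN1) (Real.rpow_nonneg hlam.le _)
        _ ≤ lam ^ (-q) * ((lam ^ (-1 / β)) ^ (1 - α) / (α - 1)) := by
            apply mul_le_mul_of_nonneg_left ?_ (Real.rpow_nonneg hlam.le _)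
            apply (div_le_div_iff_of_pos_right hα1).mpr
            exact Real.rpow_le_rpow_of_nonpos hxpos hNge (by linarith)
        _ = 1 / (α - 1) * lam ^ (-θ) := by
            rw [← Real.rpow_mul hlam.le]
            have hexp : -q + -1 / β * (1 - α) = -θ := by
              rw [hθdef]; field_simp; ring
            rw [div_eq_mul_one_div, ← mul_assoc, ← Real.rpow_add hlam, hexp, mul_comm]
    calc ∑ i ∈ Finset.range N, f i + ∑' i : ℕ, f (i + N)
        ≤ 2 ^ (β * θ) * lam ^ (-θ) + 1 / (α - 1) * lam ^ (-θ) := add_le_add hhead htail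
      _ = (2 ^ (β * θ) + 1 / (α - 1)) * lam ^ (-θ) := by ring
      _ ≤ (S + 2 ^ (β * θ) + 1 / (α - 1) + 1) * lam ^ (-θ) :=
          mul_le_mul_of_nonneg_right (by linarith) hlamθ.le
end

section
/- (Varshamov–Gilbert bound) For any integer M ≥ 8 there exists a subset Θ = {θ^{(0)}, …, θ^{(N)}} of {0,1}^M with θ^{(0)} the all-zeros vector, such that the Hamming distance H(θ, θ') = Σ_{i=1}^M (θ_i − θ'_i)² exceeds M/8 for all distinct θ, θ' in Θ, and N ≥ 2^{M/8}. -/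
open Finset

/-- Each Hamming ball of radius `d` has at most `∑_{i≤d} C(M,i)` points. -/
lemma vg_ball_card (M d : ℕ) (s : Fin M → Bool) :
    (Finset.univ.filter (fun v : Fin M → Bool => hammingDist v s ≤ d)).card ≤
      ∑ i ∈ Finset.range (d + 1), M.choose i := by
  have h1 : (Finset.univ.filter (fun v : Fin M → Bool => hammingDist v s ≤ d)).card ≤
      (Finset.univ.filter (fun T : Finset (Fin M) => T.card ≤ d)).card := by
    apply Finset.card_le_card_of_injOn (fun v => Finset.univ.filter (fun j => v j ≠ s j))
    · intro v hv
      simp only [Finset.mem_coe, Finset.mem_filter, Finset.mem_univ, true_and] at hv ⊢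
      unfold hammingDist at hv
      convert hv using 2
    · intro v hv w hw hvw
      funext j
      have hvw' : Finset.univ.filter (fun j => v j ≠ s j) =
          Finset.univ.filter (fun j => w j ≠ s j) := hvw
      have h1 := Finset.ext_iff.mp hvw' j
      simp only [Finset.mem_filter, Finset.mem_univ, true_and] at h1
      cases hv' : v j <;> cases hw' : w j <;> cases hs' : s j <;> simp_all
  refine h1.trans ?_
  have h2 : (Finset.univ.filter (fun T : Finset (Fin M) => T.card ≤ d)) ⊆
      (Finset.range (d + 1)).biUnion (fun i => Finset.powersetCard i Finset.univ) := by
    intro T hT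
    simp only [Finset.mem_filter, Finset.mem_univ, true_and] at hT
    refine Finset.mem_biUnion.2 ⟨T.card, Finset.mem_range.2 (by omega), ?_⟩
    simp [Finset.mem_powersetCard]
  refine (Finset.card_le_card h2).trans ?_
  refine (Finset.card_biUnion_le).trans ?_
  apply Finset.sum_le_sum
  intro i _
  rw [Finset.card_powersetCard, Finset.card_univ, Fintype.card_fin]

/-- Bound on partial binomial sums. -/
lemma vg_sum_choose (M d : ℕ) (hd : d ≤ M) :
    ((∑ i ∈ Finset.range (d + 1), M.choose i : ℕ) : ℝ) ≤ 8 ^ d * (8 / 7) ^ (M - d) := by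
  have key : (∑ i ∈ Finset.range (d + 1), (M.choose i : ℝ)) * ((1/8) ^ d * (7/8) ^ (M - d)) ≤ 1 := by
    have h1 : ∀ i ∈ Finset.range (d + 1),
        (M.choose i : ℝ) * ((1/8) ^ d * (7/8) ^ (M - d)) ≤
        (1/8 : ℝ) ^ i * (7/8) ^ (M - i) * M.choose i := by
      intro i hi
      rw [Finset.mem_range] at hi
      have hid : i ≤ d := by omega
      have : (1/8 : ℝ) ^ d * (7/8) ^ (M - d) ≤ (1/8) ^ i * (7/8) ^ (M - i) := by
        have e1 : d = i + (d - i) := by omega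
        have e2 : M - i = (d - i) + (M - d) := by omega
        have hbase : (1/8:ℝ) ^ (d - i) ≤ (7/8) ^ (d - i) :=
          pow_le_pow_left₀ (by norm_num) (by norm_num) _
        calc (1/8:ℝ) ^ d * (7/8) ^ (M - d)
            = (1/8:ℝ) ^ i * ((1/8) ^ (d - i) * (7/8) ^ (M - d)) := by
              have e1' : (1/8:ℝ) ^ d = (1/8:ℝ) ^ i * (1/8) ^ (d - i) := by
                rw [← pow_add]
                congr 1 <;> omega
              rw [e1', mul_assoc]
          _ ≤ (1/8:ℝ) ^ i * ((7/8) ^ (d - i) * (7/8) ^ (M - d)) := by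
              apply mul_le_mul_of_nonneg_left _ (by positivity)
              exact mul_le_mul_of_nonneg_right hbase (by positivity)
          _ = (1/8:ℝ) ^ i * (7/8) ^ (M - i) := by
              have e2' : (7/8:ℝ) ^ (M - i) = (7/8:ℝ) ^ (d - i) * (7/8) ^ (M - d) := by
                rw [← pow_add]
                congr 1 <;> omega
              rw [e2']
      calc (M.choose i : ℝ) * ((1/8) ^ d * (7/8) ^ (M - d))
          ≤ (M.choose i : ℝ) * ((1/8) ^ i * (7/8) ^ (M - i)) := by
            apply mul_le_mul_of_nonneg_left this (by positivity)
        _ = (1/8 : ℝ) ^ i * (7/8) ^ (M - i) * M.choose i := by ring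
    calc (∑ i ∈ Finset.range (d + 1), (M.choose i : ℝ)) * ((1/8) ^ d * (7/8) ^ (M - d))
        = ∑ i ∈ Finset.range (d + 1), (M.choose i : ℝ) * ((1/8) ^ d * (7/8) ^ (M - d)) := by
          rw [Finset.sum_mul]
      _ ≤ ∑ i ∈ Finset.range (d + 1), (1/8 : ℝ) ^ i * (7/8) ^ (M - i) * M.choose i :=
          Finset.sum_le_sum h1
      _ ≤ ∑ i ∈ Finset.range (M + 1), (1/8 : ℝ) ^ i * (7/8) ^ (M - i) * M.choose i := by
          apply Finset.sum_le_sum_of_subset_of_nonneg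
          · apply Finset.range_subset_range.2; omega
          · intro i _ _; positivity
      _ = ((1/8 : ℝ) + 7/8) ^ M := (add_pow _ _ _).symm
      _ = 1 := by norm_num
  push_cast
  have hpos : (0:ℝ) < (1/8) ^ d * (7/8) ^ (M - d) := by positivity
  rw [← le_div_iff₀ hpos] at key
  refine le_trans key (le_of_eq ?_)
  rw [div_eq_iff (ne_of_gt hpos)]
  rw [show (8:ℝ) ^ d * (8/7) ^ (M - d) * ((1/8) ^ d * (7/8) ^ (M - d))
      = ((8:ℝ) * (1/8)) ^ d * ((8/7) * (7/8)) ^ (M - d) from by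
        rw [mul_pow, mul_pow]; ring]
  norm_num

/-- The key real-number estimate. -/
lemma vg_real (M d N : ℕ) (hM : 8 ≤ M) (hdM : d ≤ M) (hd : (d : ℝ) ≤ (M : ℝ) / 8)
    (h : (2:ℝ) ^ M ≤ (N + 1) * (8 ^ d * (8 / 7) ^ (M - d))) :
    (2 : ℝ) ^ ((M : ℝ) / 8) ≤ (N : ℝ) := by
  have hr1 : 1 ≤ (M : ℝ) / 8 := by
    rw [le_div_iff₀ (by norm_num)]
    have : (8:ℝ) ≤ (M:ℝ) := by exact_mod_cast hM
    linarith
  set r : ℝ := (M : ℝ) / 8 with hr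
  have hrpos : 0 ≤ r := by linarith
  have hX : (0:ℝ) < 8 ^ d * (8 / 7) ^ (M - d) := by positivity
  have hXid : (2:ℝ) ^ M / (8 ^ d * (8 / 7) ^ (M - d)) = 7 ^ (M - d) / 4 ^ M := by
    rw [div_eq_div_iff (ne_of_gt hX) (by positivity)]
    have e : M = d + (M - d) := by omega
    calc (2:ℝ) ^ M * 4 ^ M = 8 ^ M := by rw [← mul_pow]; norm_num
      _ = 8 ^ d * 8 ^ (M - d) := by rw [← pow_add, ← e]
      _ = 7 ^ (M - d) * (8 ^ d * (8 / 7) ^ (M - d)) := by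
          rw [div_pow]; field_simp
  have h2 : (7:ℝ) ^ (M - d) / 4 ^ M ≤ (N + 1 : ℝ) := by
    rw [← hXid, div_le_iff₀ hX]
    exact le_trans h (le_of_eq (by ring))
  -- lower bound 7^(M-d)/4^M ≥ 2 * 2^r via rpow
  have h3 : 2 * (2:ℝ) ^ r ≤ (7:ℝ) ^ (M - d) / 4 ^ M := by
    have hMd7 : (7:ℝ) * r ≤ ((M - d : ℕ) : ℝ) := by
      have hc : ((M - d : ℕ) : ℝ) = (M : ℝ) - (d : ℝ) := by
        push_cast [Nat.cast_sub hdM]; ring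
      rw [hc, hr]; linarith
    have e7 : (7:ℝ) ^ (M - d) = (7:ℝ) ^ (((M - d : ℕ) : ℝ)) :=
      (Real.rpow_natCast 7 (M - d)).symm
    have e4 : ((4:ℝ) ^ M)⁻¹ = (4:ℝ) ^ (-(8 * r) : ℝ) := by
      rw [hr, show (8 * ((M:ℝ)/8)) = ((M:ℕ):ℝ) from by push_cast; ring,
        Real.rpow_neg (by norm_num), Real.rpow_natCast]
    rw [div_eq_mul_inv, e7, e4]
    have k1 : (823543:ℝ) ^ r = (7:ℝ) ^ ((7:ℝ) * r) := by
      rw [Real.rpow_mul (by norm_num)]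
      norm_num [show (7:ℝ) = ((7:ℕ):ℝ) from by norm_num, Real.rpow_natCast]
    have k2 : (65536:ℝ) ^ r = (4:ℝ) ^ ((8:ℝ) * r) := by
      rw [Real.rpow_mul (by norm_num)]
      norm_num [show (4:ℝ) = ((4:ℕ):ℝ) from by norm_num, Real.rpow_natCast]
    have k3 : (2:ℝ) ^ (2 * r) = (4:ℝ) ^ r := by
      rw [Real.rpow_mul (by norm_num)]
      norm_num [show (2:ℝ) = ((2:ℕ):ℝ) from by norm_num, Real.rpow_natCast]
    calc 2 * (2:ℝ) ^ r = (2:ℝ) ^ (r + 1) := by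
          rw [Real.rpow_add (by norm_num), Real.rpow_one]; ring
      _ ≤ (2:ℝ) ^ (2 * r) := Real.rpow_le_rpow_of_exponent_le (by norm_num) (by linarith)
      _ = (4:ℝ) ^ r := k3
      _ ≤ (823543:ℝ) ^ r * ((65536:ℝ) ^ r)⁻¹ := by
          have k4 : (4:ℝ) ^ r * 65536 ^ r ≤ 823543 ^ r := by
            rw [← Real.mul_rpow (by norm_num) (by norm_num)]
            exact Real.rpow_le_rpow (by norm_num) (by norm_num) hrpos
          rw [← div_eq_mul_inv, le_div_iff₀ (by positivity)]
          exact k4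
      _ = (7:ℝ) ^ ((7:ℝ) * r) * ((4:ℝ) ^ ((8:ℝ) * r))⁻¹ := by rw [k1, k2]
      _ ≤ (7:ℝ) ^ (((M - d : ℕ) : ℝ)) * ((4:ℝ) ^ (-(8 * r) : ℝ)) := by
          rw [← Real.rpow_neg (by norm_num)]
          exact mul_le_mul_of_nonneg_right
            (Real.rpow_le_rpow_of_exponent_le (by norm_num) hMd7)
            (Real.rpow_nonneg (by norm_num) _)
  have h4 : 2 * (2:ℝ) ^ r ≤ (N + 1 : ℝ) := le_trans h3 h2
  have h5 : (1:ℝ) ≤ (2:ℝ) ^ r := Real.one_le_rpow (by norm_num) hrpos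
  linarith

/-- Varshamov–Gilbert bound: for any `M ≥ 8` there exist `N + 1` binary vectors
`θ^{(0)}, …, θ^{(N)}` in `{0,1}^M` with `θ^{(0)}` the all-zeros vector, pairwise Hamming
distance exceeding `M/8`, and `N ≥ 2^{M/8}`. -/
theorem stmt_8 (M : ℕ) (hM : 8 ≤ M) :
    ∃ (N : ℕ) (θ : Fin (N + 1) → (Fin M → Bool)),
      θ 0 = (fun _ => false) ∧
      Function.Injective θ ∧
      (∀ j k : Fin (N + 1), j ≠ k → (M : ℝ) / 8 < (hammingDist (θ j) (θ k) : ℝ)) ∧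
      (2 : ℝ) ^ ((M : ℝ) / 8) ≤ (N : ℝ) := by
  classical
  set d : ℕ := M / 8 with hd
  set z0 : Fin M → Bool := fun _ => false with hz0
  set P : Finset (Fin M → Bool) → Prop :=
    fun S => z0 ∈ S ∧ ∀ x ∈ S, ∀ y ∈ S, x ≠ y → d < hammingDist x y with hP
  have hne : (Finset.univ.filter P).Nonempty := by
    refine ⟨{z0}, ?_⟩
    simp only [Finset.mem_filter, Finset.mem_univ, true_and, hP]
    refine ⟨Finset.mem_singleton_self _, ?_⟩
    intro x hx y hy hxy
    rw [Finset.mem_singleton] at hx hy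
    exact absurd (hx.trans hy.symm) hxy
  obtain ⟨S, hS, hmax⟩ := Finset.exists_max_image (Finset.univ.filter P) Finset.card hne
  rw [Finset.mem_filter] at hS
  obtain ⟨-, hz0S, hSdist⟩ := hS
  -- maximality: every vector is within distance d of S
  have hcover : ∀ v : Fin M → Bool, ∃ s ∈ S, hammingDist v s ≤ d := by
    intro v
    by_contra hcon
    push_neg at hcon
    have hvS : v ∉ S := fun hv => by simpa using hcon v hv
    have hgood : P (insert v S) := by
      constructor
      · exact Finset.mem_insert_of_mem hz0S
      · intro x hx y hy hxy
        rw [Finset.mem_insert] at hx hy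
        rcases hx with rfl | hx
        · rcases hy with rfl | hy
          · exact absurd rfl hxy
          · exact hcon y hy
        · rcases hy with rfl | hy
          · rw [hammingDist_comm]
            exact hcon x hx
          · exact hSdist x hx y hy hxy
    have : (insert v S).card ≤ S.card :=
      hmax _ (Finset.mem_filter.2 ⟨Finset.mem_univ _, hgood⟩)
    rw [Finset.card_insert_of_notMem hvS] at this
    omega
  -- counting: 2^M ≤ |S| * ball volume
  have hdM : d ≤ M := Nat.div_le_self _ _
  have hcount : 2 ^ M ≤ S.card * ∑ i ∈ Finset.range (d + 1), M.choose i := by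
    have hsub : (Finset.univ : Finset (Fin M → Bool)) ⊆
        S.biUnion (fun s => Finset.univ.filter (fun v => hammingDist v s ≤ d)) := by
      intro v _
      obtain ⟨s, hs, hvs⟩ := hcover v
      exact Finset.mem_biUnion.2 ⟨s, hs, by simp [hvs]⟩
    calc 2 ^ M = (Finset.univ : Finset (Fin M → Bool)).card := by
          rw [Finset.card_univ]; simp
      _ ≤ (S.biUnion (fun s => Finset.univ.filter (fun v => hammingDist v s ≤ d))).card :=
          Finset.card_le_card hsub
      _ ≤ ∑ s ∈ S, (Finset.univ.filter (fun v => hammingDist v s ≤ d)).card :=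
          Finset.card_biUnion_le
      _ ≤ ∑ s ∈ S, ∑ i ∈ Finset.range (d + 1), M.choose i :=
          Finset.sum_le_sum fun s _ => vg_ball_card M d s
      _ = S.card * ∑ i ∈ Finset.range (d + 1), M.choose i := by
          rw [Finset.sum_const, smul_eq_mul]
  have hScard : 1 ≤ S.card := Finset.card_pos.2 ⟨z0, hz0S⟩
  set N : ℕ := S.card - 1 with hN
  have hcardN : S.card = N + 1 := by omega
  -- build θ from S
  have e := S.equivFin
  rw [hcardN] at e
  set i0 : Fin (N + 1) := e ⟨z0, hz0S⟩ with hi0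
  set θ : Fin (N + 1) → (Fin M → Bool) :=
    fun i => ((e.symm (Equiv.swap 0 i0 i)) : Fin M → Bool) with hθ
  refine ⟨N, θ, ?_, ?_, ?_, ?_⟩
  · rw [hθ]
    simp only [Equiv.swap_apply_left, hi0, Equiv.symm_apply_apply]
  · intro i j hij
    rw [hθ] at hij
    simp only at hij
    have := e.symm.injective (Subtype.ext hij)
    exact (Equiv.swap 0 i0).injective this
  · intro j k hjk
    have hmem : ∀ i, θ i ∈ S := fun i => (e.symm (Equiv.swap 0 i0 i)).2
    have hne' : θ j ≠ θ k := by
      intro hEq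
      apply hjk
      have := e.symm.injective (Subtype.ext hEq)
      exact (Equiv.swap 0 i0).injective this
    have hlt := hSdist _ (hmem j) _ (hmem k) hne'
    have hlt8 : M < hammingDist (θ j) (θ k) * 8 := by
      rw [hd] at hlt
      omega
    rw [div_lt_iff₀ (by norm_num : (0:ℝ) < 8)]
    calc (M:ℝ) < (hammingDist (θ j) (θ k) * 8 : ℕ) := by exact_mod_cast hlt8
      _ = (hammingDist (θ j) (θ k) : ℝ) * 8 := by push_cast; ring
  · -- the estimate
    apply vg_real M d N hM hdM
    · rw [hd, le_div_iff₀ (by norm_num : (0:ℝ) < 8)]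
      exact_mod_cast Nat.div_mul_le_self M 8
    · have h1 : ((2:ℕ) ^ M : ℝ) ≤ ((S.card : ℝ)) * ((∑ i ∈ Finset.range (d + 1), M.choose i : ℕ) : ℝ) := by
        exact_mod_cast hcount
      have h2 := vg_sum_choose M d hdM
      calc (2:ℝ) ^ M = ((2:ℕ) ^ M : ℝ) := by push_cast; ring
        _ ≤ (S.card : ℝ) * ((∑ i ∈ Finset.range (d + 1), M.choose i : ℕ) : ℝ) := h1
        _ ≤ (S.card : ℝ) * (8 ^ d * (8 / 7) ^ (M - d)) := by
            apply mul_le_mul_of_nonneg_left h2 (Nat.cast_nonneg _)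
        _ = (N + 1) * (8 ^ d * (8 / 7) ^ (M - d)) := by
            rw [hcardN]; push_cast; ring
end

section
/- Let Λ and Λ̂ be positive bounded self-adjoint operators on a Hilbert space and λ > 0. If ‖(Λ̂ − Λ)(Λ + λI)^{-1}‖ ≤ 1/2, then ‖(Λ + λI)^{-1}(Λ̂ + λI)‖ ≤ 3/2 and, for all l ∈ [0,1], ‖(Λ + λI)^{-l}(Λ̂ + λI)^{l}‖ ≤ (3/2)^l. -/
open scoped NNReal ENNReal

section SpectralRadiusComm

private lemma aux_biSup_nnnorm_le {𝕜 : Type*} [NormedField 𝕜] {s t : Set 𝕜}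
    (h : s \ {0} = t \ {0}) :
    (⨆ k ∈ s, (‖k‖₊ : ℝ≥0∞)) ≤ ⨆ k ∈ t, (‖k‖₊ : ℝ≥0∞) := by
  refine iSup₂_le fun k hk => ?_
  rcases eq_or_ne k 0 with rfl | hk0
  · simp
  · have hkt : k ∈ t := by
      have hmem : k ∈ t \ {0} := h ▸ ⟨hk, hk0⟩
      exact hmem.1
    exact le_iSup₂ (f := fun k (_ : k ∈ t) => (‖k‖₊ : ℝ≥0∞)) k hkt

private lemma aux_spectralRadius_mul_comm {𝕜 A : Type*} [NormedField 𝕜] [NormedRing A]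
    [NormedAlgebra 𝕜 A] (a b : A) :
    spectralRadius 𝕜 (a * b) = spectralRadius 𝕜 (b * a) :=
  le_antisymm (aux_biSup_nnnorm_le (spectrum.nonzero_mul_comm a b))
    (aux_biSup_nnnorm_le (spectrum.nonzero_mul_comm b a))

/-- If `x * y` is selfadjoint, then `‖x * y‖ ≤ ‖y * x‖`. -/
private lemma aux_norm_mul_le_swap {A : Type*} [CStarAlgebra A] [Nontrivial A]
    (x y : A) (h : IsSelfAdjoint (x * y)) : ‖x * y‖ ≤ ‖y * x‖ := by
  have h1 : spectralRadius ℂ (x * y) = (‖x * y‖₊ : ℝ≥0∞) := h.spectralRadius_eq_nnnorm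
  have h2 : spectralRadius ℂ (y * x) ≤ (‖y * x‖₊ : ℝ≥0∞) := spectrum.spectralRadius_le_nnnorm _
  have h3 : (‖x * y‖₊ : ℝ≥0∞) ≤ (‖y * x‖₊ : ℝ≥0∞) := by
    rw [← h1, aux_spectralRadius_mul_comm]; exact h2
  exact_mod_cast h3

end SpectralRadiusComm

section Exp

private lemma aux_abs_exp_sub_one (v : ℝ) : |Real.exp v - 1| ≤ Real.exp |v| - 1 := by
  rcases le_or_gt 0 v with hv | hv
  · rw [abs_of_nonneg hv, abs_of_nonneg (by linarith [Real.one_le_exp hv])]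
  · rw [abs_of_neg hv]
    have h1 := Real.add_one_le_exp v
    have h2 := Real.add_one_le_exp (-v)
    have h3 : Real.exp v ≤ 1 := Real.exp_le_one_iff.mpr hv.le
    rw [abs_of_nonpos (by linarith)]
    linarith

end Exp

section Rpow

variable {A : Type*} [CStarAlgebra A]

private lemma aux_contOn {a : A} (hpos : ∀ x ∈ spectrum ℝ a, 0 < x) (s : ℝ) :
    ContinuousOn (fun x : ℝ => x ^ s) (spectrum ℝ a) := fun x hx =>
  (Real.continuousAt_rpow_const x s (Or.inl (hpos x hx).ne')).continuousWithinAt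

private lemma aux_rpow_mul {a : A} (ha : IsSelfAdjoint a)
    (hpos : ∀ x ∈ spectrum ℝ a, 0 < x) (s t : ℝ) :
    cfc (fun x : ℝ => x ^ s) a * cfc (fun x : ℝ => x ^ t) a
      = cfc (fun x : ℝ => x ^ (s + t)) a := by
  rw [← cfc_mul _ _ a (aux_contOn hpos s) (aux_contOn hpos t)]
  exact cfc_congr fun x hx => (Real.rpow_add (hpos x hx) s t).symm

private lemma aux_rpow_zero {a : A} (ha : IsSelfAdjoint a) :
    cfc (fun x : ℝ => x ^ (0 : ℝ)) a = 1 := by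
  have h : cfc (fun x : ℝ => x ^ (0 : ℝ)) a = cfc (fun _ : ℝ => (1 : ℝ)) a :=
    cfc_congr fun x _ => Real.rpow_zero x
  rw [h, cfc_const_one ℝ a]

private lemma aux_rpow_one {a : A} (ha : IsSelfAdjoint a) :
    cfc (fun x : ℝ => x ^ (1 : ℝ)) a = a := by
  have h : cfc (fun x : ℝ => x ^ (1 : ℝ)) a = cfc (fun x : ℝ => x) a :=
    cfc_congr fun x _ => Real.rpow_one x
  rw [h, cfc_id' ℝ a]

/-- Continuity of `s ↦ a ^ s` for `a` selfadjoint with spectrum in `(0, ∞)`. -/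
private lemma aux_cont_rpow (a : A) (ha : IsSelfAdjoint a)
    (hpos : ∀ x ∈ spectrum ℝ a, 0 < x) :
    Continuous fun s : ℝ => cfc (fun x : ℝ => x ^ s) a := by
  -- bound on |log x| over the spectrum
  obtain ⟨L, hL0, hL⟩ : ∃ L : ℝ, 0 ≤ L ∧ ∀ x ∈ spectrum ℝ a, |Real.log x| ≤ L := by
    have hcont : ContinuousOn (fun x : ℝ => |Real.log x|) (spectrum ℝ a) := fun x hx =>
      ((Real.continuousAt_log (hpos x hx).ne').continuousWithinAt).abs
    have hcomp : IsCompact ((fun x : ℝ => |Real.log x|) '' spectrum ℝ a) :=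
      (spectrum.isCompact a).image_of_continuousOn hcont
    obtain ⟨L', hL'⟩ := hcomp.bddAbove
    refine ⟨max L' 0, le_max_right _ _, fun x hx => ?_⟩
    exact le_trans (hL' ⟨x, hx, rfl⟩) (le_max_left _ _)
  rw [continuous_iff_continuousAt]
  intro t
  rw [ContinuousAt, tendsto_iff_norm_sub_tendsto_zero]
  have hbound : ∀ s : ℝ,
      ‖cfc (fun x : ℝ => x ^ s) a - cfc (fun x : ℝ => x ^ t) a‖
        ≤ Real.exp (|t| * L) * (Real.exp (L * |s - t|) - 1) := by
    intro s
    rw [← cfc_sub _ _ a (aux_contOn hpos s) (aux_contOn hpos t)]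
    have hc : (0:ℝ) ≤ Real.exp (|t| * L) * (Real.exp (L * |s - t|) - 1) := by
      have h1e := Real.one_le_exp (by positivity : (0:ℝ) ≤ L * |s - t|)
      have h2e := Real.exp_nonneg (|t| * L)
      nlinarith
    refine norm_cfc_le hc fun x hx => ?_
    have hx0 := hpos x hx
    have hlog := hL x hx
    have hsplit : x ^ s - x ^ t = x ^ t * (x ^ (s - t) - 1) := by
      rw [mul_sub, ← Real.rpow_add hx0, mul_one]
      ring_nf
    rw [Real.norm_eq_abs, hsplit, abs_mul]
    have h1 : |x ^ t| ≤ Real.exp (|t| * L) := by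
      rw [abs_of_nonneg (Real.rpow_nonneg hx0.le t), Real.rpow_def_of_pos hx0]
      refine Real.exp_le_exp.mpr ?_
      calc Real.log x * t ≤ |Real.log x * t| := le_abs_self _
        _ = |t| * |Real.log x| := by rw [abs_mul, mul_comm]
        _ ≤ |t| * L := by gcongr
    have h2 : |x ^ (s - t) - 1| ≤ Real.exp (L * |s - t|) - 1 := by
      rw [Real.rpow_def_of_pos hx0]
      refine (aux_abs_exp_sub_one _).trans ?_
      have : |Real.log x * (s - t)| ≤ L * |s - t| := by
        rw [abs_mul]; gcongr
      have := Real.exp_le_exp.mpr this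
      linarith
    exact mul_le_mul h1 h2 (abs_nonneg _) (Real.exp_nonneg _)
  refine squeeze_zero (fun s => norm_nonneg _) hbound ?_
  have hcont : Continuous fun s : ℝ =>
      Real.exp (|t| * L) * (Real.exp (L * |s - t|) - 1) := by fun_prop
  have := hcont.tendsto t
  simpa using this

end Rpow

section Cordes

variable {A : Type*} [CStarAlgebra A] [PartialOrder A] [StarOrderedRing A]

private lemma aux_spec_pos {a : A} (ha0 : 0 ≤ a) (haU : IsUnit a) :
    ∀ x ∈ spectrum ℝ a, 0 < x := fun x hx =>
  lt_of_le_of_ne (spectrum_nonneg_of_nonneg ha0 hx)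
    (by rintro rfl; exact (spectrum.zero_notMem_iff ℝ |>.mpr haU) hx)

/-- The Cordes inequality for positive invertible elements of a C⋆-algebra. -/
private lemma aux_cordes (a b : A) (ha0 : 0 ≤ a) (hb0 : 0 ≤ b)
    (haU : IsUnit a) (hbU : IsUnit b) {l : ℝ} (hl0 : 0 ≤ l) (hl1 : l ≤ 1) :
    ‖cfc (fun x : ℝ => x ^ l) a * cfc (fun x : ℝ => x ^ l) b‖ ≤ ‖a * b‖ ^ l := by
  rcases subsingleton_or_nontrivial A with hS | hN
  · rw [Subsingleton.elim (cfc (fun x : ℝ => x ^ l) a * cfc (fun x : ℝ => x ^ l) b) 0,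
      norm_zero]
    exact Real.rpow_nonneg (norm_nonneg _) l
  have hsa : IsSelfAdjoint a := .of_nonneg ha0
  have hsb : IsSelfAdjoint b := .of_nonneg hb0
  have hpa := aux_spec_pos ha0 haU
  have hpb := aux_spec_pos hb0 hbU
  set M : ℝ := ‖a * b‖ with hM
  have hM0 : 0 < M := norm_pos_iff.mpr (haU.mul hbU).ne_zero
  set pa : ℝ → A := fun s => cfc (fun x : ℝ => x ^ s) a with hpa_def
  set pb : ℝ → A := fun s => cfc (fun x : ℝ => x ^ s) b with hpb_def
  have hsa_p : ∀ s, IsSelfAdjoint (pa s) := fun s => cfc_predicate _ a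
  have hsb_p : ∀ s, IsSelfAdjoint (pb s) := fun s => cfc_predicate _ b
  set g : ℝ → ℝ := fun s => ‖pa s * pb s‖ with hg_def
  have hg_cont : Continuous g :=
    ((aux_cont_rpow a hsa hpa).mul (aux_cont_rpow b hsb hpb)).norm
  -- the midpoint inequality
  have key : ∀ s t : ℝ, g ((s + t) / 2) ^ 2 ≤ g s * g t := by
    intro s t
    set m := (s + t) / 2 with hm
    have hmm : m + m = s + t := by rw [hm]; ring
    have h1 : g m ^ 2 = ‖(pb m * pa m) * (pa m * pb m)‖ := by
      rw [hg_def]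
      have := CStarRing.norm_star_mul_self (x := pa m * pb m)
      rw [star_mul, (hsa_p m).star_eq, (hsb_p m).star_eq] at this
      rw [sq, ← this]
    have h2 : (pb m * pa m) * (pa m * pb m) = (pb m * pa s) * (pa t * pb m) := by
      have haa : pa m * pa m = pa s * pa t := by
        rw [hpa_def]
        simp only
        rw [aux_rpow_mul hsa hpa m m, aux_rpow_mul hsa hpa s t, hmm]
      calc (pb m * pa m) * (pa m * pb m) = pb m * (pa m * pa m) * pb m := by
            simp only [mul_assoc]
        _ = pb m * (pa s * pa t) * pb m := by rw [haa]
        _ = (pb m * pa s) * (pa t * pb m) := by simp only [mul_assoc]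
    have hbb : pb m * pb m = pb t * pb s := by
      rw [hpb_def]
      simp only
      rw [aux_rpow_mul hsb hpb m m, aux_rpow_mul hsb hpb t s, hmm, add_comm t s]
    have hsa_u : IsSelfAdjoint ((pb m * pa s) * (pa t * pb m)) := by
      rw [← h2]
      rw [IsSelfAdjoint]
      simp only [star_mul, (hsa_p m).star_eq, (hsb_p m).star_eq, mul_assoc]
    have h3 : ‖(pb m * pa s) * (pa t * pb m)‖ ≤ ‖(pa t * pb m) * (pb m * pa s)‖ :=
      aux_norm_mul_le_swap _ _ hsa_u
    have h4 : (pa t * pb m) * (pb m * pa s) = (pa t * pb t) * (pb s * pa s) := by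
      calc (pa t * pb m) * (pb m * pa s) = pa t * (pb m * pb m) * pa s := by
            simp only [mul_assoc]
        _ = pa t * (pb t * pb s) * pa s := by rw [hbb]
        _ = (pa t * pb t) * (pb s * pa s) := by simp only [mul_assoc]
    have h5 : ‖pb s * pa s‖ = g s := by
      rw [hg_def]
      have : pb s * pa s = star (pa s * pb s) := by
        rw [star_mul, (hsa_p s).star_eq, (hsb_p s).star_eq]
      rw [this, norm_star]
    calc g ((s + t) / 2) ^ 2 = ‖(pb m * pa s) * (pa t * pb m)‖ := by rw [h1, h2]
      _ ≤ ‖(pa t * pb m) * (pb m * pa s)‖ := h3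
      _ = ‖(pa t * pb t) * (pb s * pa s)‖ := by rw [h4]
      _ ≤ ‖pa t * pb t‖ * ‖pb s * pa s‖ := norm_mul_le _ _
      _ = g t * g s := by rw [h5]
      _ = g s * g t := mul_comm _ _
  -- the endpoints
  have h0 : g 0 ≤ 1 := by
    rw [hg_def, hpa_def, hpb_def]
    simp only
    rw [aux_rpow_zero hsa, aux_rpow_zero hsb, mul_one, norm_one]
  have h1 : g 1 = M := by
    rw [hg_def, hpa_def, hpb_def]
    simp only
    rw [aux_rpow_one hsa, aux_rpow_one hsb]
  -- dyadic values
  have dy : ∀ n : ℕ, ∀ k : ℕ, k ≤ 2 ^ n → g ((k : ℝ) / 2 ^ n) ≤ M ^ ((k : ℝ) / 2 ^ n) := by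
    intro n
    induction n with
    | zero =>
      intro k hk
      interval_cases k
      · simpa using h0
      · simpa using le_of_eq h1
    | succ n ih =>
      intro k hk
      rcases Nat.even_or_odd k with ⟨j, hj⟩ | ⟨j, hj⟩
      · have hj2 : j ≤ 2 ^ n := by omega
        have heq : (k : ℝ) / 2 ^ (n + 1) = (j : ℝ) / 2 ^ n := by
          subst hj; push_cast; field_simp; ring
        rw [heq]
        exact ih j hj2
      · have hj2 : j + 1 ≤ 2 ^ n := by omega
        have hj1 : j ≤ 2 ^ n := by omega
        set s : ℝ := (j : ℝ) / 2 ^ n with hs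
        set t : ℝ := ((j : ℝ) + 1) / 2 ^ n with ht
        have hmid : (k : ℝ) / 2 ^ (n + 1) = (s + t) / 2 := by
          subst hj; rw [hs, ht]; push_cast; field_simp; ring
        have hgs : g s ≤ M ^ s := ih j hj1
        have hgt : g t ≤ M ^ t := by
          have := ih (j + 1) hj2
          push_cast at this
          exact this
        have hsq : g ((s + t) / 2) ^ 2 ≤ (M ^ ((s + t) / 2)) ^ 2 := by
          calc g ((s + t) / 2) ^ 2 ≤ g s * g t := key s t
            _ ≤ M ^ s * M ^ t := by
                have hgs0 : 0 ≤ g s := norm_nonneg _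
                have hgt0 : 0 ≤ g t := norm_nonneg _
                exact mul_le_mul hgs hgt hgt0 (Real.rpow_nonneg hM0.le s)
            _ = M ^ (s + t) := (Real.rpow_add hM0 s t).symm
            _ = (M ^ ((s + t) / 2)) ^ 2 := by
                rw [sq, ← Real.rpow_add hM0]
                ring_nf
        have hres : g ((s + t) / 2) ≤ M ^ ((s + t) / 2) := by
          have := Real.sqrt_le_sqrt hsq
          rwa [Real.sqrt_sq (norm_nonneg _), Real.sqrt_sq (Real.rpow_nonneg hM0.le _)] at this
        rw [hmid]
        exact hres
  -- approximate l by dyadics from below and pass to the limit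
  set u : ℕ → ℝ := fun n => ((⌊l * 2 ^ n⌋₊ : ℕ) : ℝ) / 2 ^ n with hu
  have hu_le : ∀ n, u n ≤ l := by
    intro n
    rw [hu]
    have h2n : (0:ℝ) < 2 ^ n := by positivity
    rw [div_le_iff₀ h2n]
    exact Nat.floor_le (by positivity)
  have hu_lb : ∀ n, l - (1 / 2 : ℝ) ^ n ≤ u n := by
    intro n
    have h2n : (0:ℝ) < 2 ^ n := by positivity
    have hfl : l * 2 ^ n - 1 ≤ (⌊l * 2 ^ n⌋₊ : ℝ) := (Nat.sub_one_lt_floor (l * 2 ^ n)).le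
    have hhalf : ((1:ℝ)/2) ^ n * 2 ^ n = 1 := by
      rw [div_pow, one_pow]
      field_simp
    rw [hu, sub_le_iff_le_add, div_add' _ _ _ h2n.ne', le_div_iff₀ h2n]
    nlinarith
  have hu_tendsto : Filter.Tendsto u Filter.atTop (nhds l) := by
    have hlow : Filter.Tendsto (fun n : ℕ => l - (1 / 2 : ℝ) ^ n) Filter.atTop (nhds l) := by
      have := tendsto_pow_atTop_nhds_zero_of_lt_one (by norm_num : (0:ℝ) ≤ 1/2)
        (by norm_num : (1/2 : ℝ) < 1)
      simpa using Filter.Tendsto.const_sub l this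
    exact tendsto_of_tendsto_of_tendsto_of_le_of_le hlow tendsto_const_nhds hu_lb hu_le
  have hgn : ∀ n, g (u n) ≤ M ^ (u n) := by
    intro n
    have hk : ⌊l * 2 ^ n⌋₊ ≤ 2 ^ n := by
      have : l * 2 ^ n ≤ ((2 ^ n : ℕ) : ℝ) := by
        push_cast
        nlinarith [pow_pos (by norm_num : (0:ℝ) < 2) n]
      calc ⌊l * 2 ^ n⌋₊ ≤ ⌊((2 ^ n : ℕ) : ℝ)⌋₊ := Nat.floor_le_floor this
        _ = 2 ^ n := Nat.floor_natCast _
    exact dy n _ hk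
  have hg_lim : Filter.Tendsto (fun n => g (u n)) Filter.atTop (nhds (g l)) :=
    (hg_cont.tendsto l).comp hu_tendsto
  have hM_lim : Filter.Tendsto (fun n => M ^ (u n)) Filter.atTop (nhds (M ^ l)) := by
    have hMc : Continuous fun y : ℝ => M ^ y := by
      have : (fun y : ℝ => M ^ y) = fun y : ℝ => Real.exp (Real.log M * y) := by
        funext y
        rw [Real.rpow_def_of_pos hM0]
      rw [this]
      fun_prop
    exact (hMc.tendsto l).comp hu_tendsto
  exact le_of_tendsto_of_tendsto' hg_lim hM_lim hgn

end Cordes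

/-- If `Λ, Λ̂` are positive bounded self-adjoint operators, `λ > 0`,
`R = (Λ+λI)⁻¹`, `R̂ = (Λ̂+λI)⁻¹`, and `‖(Λ̂ − Λ)(Λ + λI)⁻¹‖ ≤ 1/2`, then
`‖(Λ + λI)⁻¹(Λ̂ + λI)‖ ≤ 3/2` and, for all `l ∈ [0,1]`,
`‖(Λ + λI)^{-l} (Λ̂ + λI)^{l}‖ ≤ (3/2)^l` (powers via continuous functional calculus). -/
theorem stmt_10 {H : Type*} [NormedAddCommGroup H] [InnerProductSpace ℂ H] [CompleteSpace H]
    [TopologicalSpace.SeparableSpace H]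
    (Λ Λh R Rh : H →L[ℂ] H) (lam : ℝ) (hlam : 0 < lam)
    (hΛ : Λ.IsPositive) (hΛh : Λh.IsPositive)
    (hR1 : (Λ + (lam : ℂ) • 1) * R = 1) (hR2 : R * (Λ + (lam : ℂ) • 1) = 1)
    (hRh1 : (Λh + (lam : ℂ) • 1) * Rh = 1) (hRh2 : Rh * (Λh + (lam : ℂ) • 1) = 1)
    (hsmall : ‖(Λh - Λ) * R‖ ≤ 1 / 2) :
    ‖R * (Λh + (lam : ℂ) • 1)‖ ≤ 3 / 2 ∧
      ∀ l : ℝ, 0 ≤ l → l ≤ 1 →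
        ‖cfc (fun x : ℝ => x ^ l) R * cfc (fun x : ℝ => x ^ l) (Λh + (lam : ℂ) • 1)‖
          ≤ (3 / 2 : ℝ) ^ l := by
  rcases subsingleton_or_nontrivial (H →L[ℂ] H) with hS | hN
  · constructor
    · rw [Subsingleton.elim (R * (Λh + (lam : ℂ) • 1)) 0, norm_zero]
      norm_num
    · intro l hl0 hl1
      rw [Subsingleton.elim
        (cfc (fun x : ℝ => x ^ l) R * cfc (fun x : ℝ => x ^ l) (Λh + (lam : ℂ) • 1)) 0,
        norm_zero]
      positivity
  · have hsmul_sa : IsSelfAdjoint ((lam : ℂ) • (1 : H →L[ℂ] H)) := by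
      rw [IsSelfAdjoint, star_smul, star_one, Complex.star_def, Complex.conj_ofReal]
    have hb_sa : IsSelfAdjoint (Λh + (lam : ℂ) • 1) := hΛh.isSelfAdjoint.add hsmul_sa
    have ha'_sa : IsSelfAdjoint (Λ + (lam : ℂ) • 1) := hΛ.isSelfAdjoint.add hsmul_sa
    have h1 : star R * (Λ + (lam : ℂ) • 1) = 1 := by
      have h := congrArg star hR1
      rwa [star_mul, ha'_sa.star_eq, star_one] at h
    have hstarR : star R = R := by
      calc star R = star R * ((Λ + (lam : ℂ) • 1) * R) := by rw [hR1, mul_one]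
        _ = (star R * (Λ + (lam : ℂ) • 1)) * R := by rw [mul_assoc]
        _ = R := by rw [h1, one_mul]
    -- positivity of `lam • 1`
    have hsmul_pos : ((lam : ℂ) • (1 : H →L[ℂ] H)).IsPositive := by
      refine ⟨hsmul_sa.isSymmetric, fun x => ?_⟩
      rw [ContinuousLinearMap.reApplyInnerSelf_apply]
      simp only [ContinuousLinearMap.smul_apply, ContinuousLinearMap.one_apply,
        inner_smul_left, Complex.conj_ofReal]
      have him : RCLike.im ((lam : ℂ)) = 0 := by simp
      have hre : RCLike.re ((lam : ℂ)) = lam := by simp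
      rw [RCLike.mul_re, him, hre, zero_mul, sub_zero]
      exact mul_nonneg hlam.le inner_self_nonneg
    have ha'0 : (0 : H →L[ℂ] H) ≤ Λ + (lam : ℂ) • 1 :=
      (ContinuousLinearMap.nonneg_iff_isPositive _).mpr (hΛ.add hsmul_pos)
    have hb0 : (0 : H →L[ℂ] H) ≤ Λh + (lam : ℂ) • 1 :=
      (ContinuousLinearMap.nonneg_iff_isPositive _).mpr (hΛh.add hsmul_pos)
    have hR0 : (0 : H →L[ℂ] H) ≤ R := by
      have hc := star_left_conjugate_nonneg ha'0 R
      rwa [h1, one_mul] at hc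
    have haU : IsUnit R := ⟨⟨R, Λ + (lam : ℂ) • 1, hR2, hR1⟩, rfl⟩
    have hbU : IsUnit (Λh + (lam : ℂ) • 1) := ⟨⟨Λh + (lam : ℂ) • 1, Rh, hRh1, hRh2⟩, rfl⟩
    have habs : (Λ + (lam : ℂ) • 1) + (Λh - Λ) = Λh + (lam : ℂ) • 1 := by abel
    have hkey : 1 + R * (Λh - Λ) = R * (Λh + (lam : ℂ) • 1) := by
      calc 1 + R * (Λh - Λ) = R * (Λ + (lam : ℂ) • 1) + R * (Λh - Λ) := by rw [hR2]
        _ = R * ((Λ + (lam : ℂ) • 1) + (Λh - Λ)) := (mul_add R _ _).symm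
        _ = R * (Λh + (lam : ℂ) • 1) := by rw [habs]
    have hRd : ‖R * (Λh - Λ)‖ ≤ 1 / 2 := by
      have hst : star ((Λh - Λ) * R) = R * (Λh - Λ) := by
        rw [star_mul, hstarR, star_sub, hΛh.isSelfAdjoint.star_eq, hΛ.isSelfAdjoint.star_eq]
      rw [← hst, norm_star]
      exact hsmall
    have part1 : ‖R * (Λh + (lam : ℂ) • 1)‖ ≤ 3 / 2 := by
      rw [← hkey]
      calc ‖1 + R * (Λh - Λ)‖ ≤ ‖(1 : H →L[ℂ] H)‖ + ‖R * (Λh - Λ)‖ := norm_add_le _ _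
        _ ≤ 1 + 1 / 2 := by rw [norm_one]; linarith
        _ = 3 / 2 := by norm_num
    refine ⟨part1, fun l hl0 hl1 => ?_⟩
    calc ‖cfc (fun x : ℝ => x ^ l) R * cfc (fun x : ℝ => x ^ l) (Λh + (lam : ℂ) • 1)‖
        ≤ ‖R * (Λh + (lam : ℂ) • 1)‖ ^ l := aux_cordes R _ hR0 hb0 haU hbU hl0 hl1
      _ ≤ (3 / 2 : ℝ) ^ l := Real.rpow_le_rpow (norm_nonneg _) part1 hl0
end

section
/- Let X be an L²(S)-valued random element with covariance operator C = E[X⊗X], ε independent of X with mean 0 and variance σ², Y = ⟨X, β*⟩ + ε, T a positive trace-class operator, Λ = T^{1/2} C T^{1/2}, and λ > 0. Then E[‖(Λ + λI)^{-1/2} T^{1/2}(Y X − (X ⊗ X)β*)‖²_{L²}] = σ² · Tr(Λ(Λ + λI)^{-1}). -/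
open MeasureTheory ProbabilityTheory
open scoped RealInnerProductSpace ENNReal NNReal

/-- For the FLR model with noise variance `σ²`, a positive trace-class operator `T` with
positive square root `S`, `Λ = T^{1/2} C T^{1/2}`, resolvent `R = (Λ + λI)⁻¹` with positive
square root `R^{1/2}`, one has
`E‖(Λ+λI)^{-1/2} T^{1/2}(YX − (X⊗X)β*)‖² = σ² · Tr(Λ(Λ+λI)⁻¹)`,
the trace being computed in the Hilbert basis `b`. -/
theorem stmt_13 {E Ω : Type*}
    [NormedAddCommGroup E] [InnerProductSpace ℝ E] [CompleteSpace E]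
    [MeasurableSpace E] [BorelSpace E] [SecondCountableTopology E]
    [MeasurableSpace Ω] (P : Measure Ω) [IsProbabilityMeasure P]
    (X : Ω → E) (ε : Ω → ℝ) (βstar : E) (Y : Ω → ℝ) (σ : ℝ)
    (hX : Measurable X) (hXL2 : MemLp X 2 P)
    (hε : Measurable ε) (hεL2 : MemLp ε 2 P)
    (hεmean : ∫ ω, ε ω ∂P = 0) (hεvar : ∫ ω, (ε ω) ^ 2 ∂P = σ ^ 2)
    (hindep : IndepFun ε X P)
    (hY : ∀ ω, Y ω = ⟪X ω, βstar⟫ + ε ω)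
    (C T S Λ R Rhalf : E →L[ℝ] E)
    (hC : ∀ f, C f = ∫ ω, ⟪X ω, f⟫ • X ω ∂P)
    (hT : T.IsPositive) (hS : S.IsPositive) (hSS : S ∘L S = T)
    (b : HilbertBasis ℕ ℝ E)
    (hTrace : Summable fun i => ⟪b i, T (b i)⟫)
    (hΛ : Λ = S ∘L (C ∘L S))
    (lam : ℝ) (hlam : 0 < lam)
    (hR1 : (Λ + lam • 1) * R = 1) (hR2 : R * (Λ + lam • 1) = 1)
    (hRhalfpos : Rhalf.IsPositive) (hRhalf : Rhalf * Rhalf = R) :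
    ∫ ω, ‖Rhalf (S (Y ω • X ω - ⟪X ω, βstar⟫ • X ω))‖ ^ 2 ∂P
      = σ ^ 2 * ∑' i, ⟪b i, Λ (R (b i))⟫ := by
  -- symmetry facts
  have hSsym : ∀ x y : E, ⟪S x, y⟫ = ⟪x, S y⟫ :=
    ContinuousLinearMap.isSelfAdjoint_iff_isSymmetric.mp hS.isSelfAdjoint
  have hRhsym : ∀ x y : E, ⟪Rhalf x, y⟫ = ⟪x, Rhalf y⟫ :=
    ContinuousLinearMap.isSelfAdjoint_iff_isSymmetric.mp hRhalfpos.isSelfAdjoint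
  have hRsym : ∀ x y : E, ⟪R x, y⟫ = ⟪x, R y⟫ := by
    intro x y
    rw [← hRhalf]
    simp only [ContinuousLinearMap.mul_apply]
    rw [hRhsym, hRhsym]
  -- integrability of ‖X‖²
  have hXsq : Integrable (fun ω => ‖X ω‖ ^ 2) P := hXL2.norm.integrable_sq
  -- the family whose sum gives the trace
  set f : ℕ → Ω → ℝ := fun i ω => ⟪R (S (X ω)), b i⟫ * ⟪b i, S (X ω)⟫ with hf
  have hf_meas : ∀ i : ℕ, AEStronglyMeasurable (f i) P := by
    intro i
    have h1 : Continuous fun x : E => ⟪R (S x), b i⟫ * ⟪b i, S x⟫ :=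
      (((R.continuous.comp S.continuous).inner continuous_const).mul
        (continuous_const.inner S.continuous))
    exact (h1.measurable.comp hX).aestronglyMeasurable
  -- finset Cauchy-Schwarz bound
  have key : ∀ (x y : E) (F : Finset ℕ),
      ∑ i ∈ F, |⟪x, b i⟫ * ⟪b i, y⟫| ≤ ‖x‖ * ‖y‖ := by
    intro x y F
    have h1 : ∀ i, |⟪x, b i⟫ * ⟪b i, y⟫| = |⟪x, b i⟫| * |⟪b i, y⟫| := fun i => abs_mul _ _
    simp only [h1]
    calc ∑ i ∈ F, |⟪x, b i⟫| * |⟪b i, y⟫|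
        ≤ Real.sqrt (∑ i ∈ F, |⟪x, b i⟫| ^ 2) * Real.sqrt (∑ i ∈ F, |⟪b i, y⟫| ^ 2) :=
          Real.sum_mul_le_sqrt_mul_sqrt _ _ _
      _ ≤ Real.sqrt (‖x‖ ^ 2) * Real.sqrt (‖y‖ ^ 2) := by
          gcongr
          · have := b.orthonormal.sum_inner_products_le (s := F) x
            simpa [Real.norm_eq_abs, real_inner_comm] using this
          · have := b.orthonormal.sum_inner_products_le (s := F) y
            simpa [Real.norm_eq_abs] using this
      _ = ‖x‖ * ‖y‖ := by
          rw [Real.sqrt_sq (norm_nonneg _), Real.sqrt_sq (norm_nonneg _)]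
  -- pointwise domination
  set Kc : ℝ := ‖R‖ * ‖S‖ * ‖S‖ with hKc
  have hdom : ∀ ω, ∑' i, (‖f i ω‖₊ : ℝ≥0∞) ≤ ENNReal.ofReal (Kc * ‖X ω‖ ^ 2) := by
    intro ω
    rw [ENNReal.tsum_eq_iSup_sum]
    refine iSup_le fun F => ?_
    have h2 : ∑ i ∈ F, (‖f i ω‖₊ : ℝ≥0∞) = ENNReal.ofReal (∑ i ∈ F, |f i ω|) := by
      rw [ENNReal.ofReal_sum_of_nonneg (fun i _ => abs_nonneg _)]
      exact Finset.sum_congr rfl fun i _ => (Real.enorm_eq_ofReal_abs _)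
    rw [h2]
    refine ENNReal.ofReal_le_ofReal ?_
    calc ∑ i ∈ F, |f i ω| ≤ ‖R (S (X ω))‖ * ‖S (X ω)‖ := key _ _ F
      _ ≤ (‖R‖ * (‖S‖ * ‖X ω‖)) * (‖S‖ * ‖X ω‖) := by
          refine mul_le_mul ?_ (S.le_opNorm _) (norm_nonneg _)
            (by positivity)
          exact (R.le_opNorm _).trans (by gcongr; exact S.le_opNorm _)
      _ = Kc * ‖X ω‖ ^ 2 := by rw [hKc]; ring
  -- the sum of lintegrals is finite
  have hsum_ne_top : ∑' i, ∫⁻ ω, ‖f i ω‖₊ ∂P ≠ ⊤ := by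
    rw [← lintegral_tsum (f := fun i ω => (‖f i ω‖₊ : ℝ≥0∞)) fun i => (hf_meas i).enorm]
    have hbound : ∫⁻ ω, ∑' i, (‖f i ω‖₊ : ℝ≥0∞) ∂P
        ≤ ∫⁻ ω, ‖Kc * ‖X ω‖ ^ 2‖₊ ∂P := by
      refine lintegral_mono fun ω => (hdom ω).trans ?_
      rw [← enorm_eq_nnnorm, Real.enorm_eq_ofReal_abs]
      exact ENNReal.ofReal_le_ofReal (le_abs_self _)
    exact ne_top_of_le_ne_top (hXsq.const_mul Kc).hasFiniteIntegral.ne hbound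
  -- pointwise Parseval identity
  have hptg : ∀ ω, ‖Rhalf (S (X ω))‖ ^ 2 = ∑' i, f i ω := by
    intro ω
    simp only [hf]
    rw [b.tsum_inner_mul_inner, ← hRhalf, ContinuousLinearMap.mul_apply, hRhsym,
      real_inner_self_eq_norm_sq]
  -- individual terms
  have hterm : ∀ i, ∫ ω, f i ω ∂P = ⟪b i, Λ (R (b i))⟫ := by
    intro i
    set w : E := S (R (b i)) with hw
    have h1 : ∀ ω, f i ω = ⟪S (b i), ⟪X ω, w⟫ • X ω⟫ := by
      intro ω
      rw [real_inner_smul_right, hf]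
      simp only [hw]
      rw [hRsym, hSsym, hSsym]
    have hm : AEStronglyMeasurable (fun ω => ⟪X ω, w⟫ • X ω) P := by
      have hφ : Continuous fun x : E => ⟪x, w⟫ • x :=
        (continuous_id.inner continuous_const).smul continuous_id
      exact (hφ.measurable.comp hX).aestronglyMeasurable
    have hint : Integrable (fun ω => ⟪X ω, w⟫ • X ω) P := by
      refine (hXsq.const_mul ‖w‖).mono' hm ?_
      refine Filter.Eventually.of_forall fun ω => ?_
      rw [norm_smul, Real.norm_eq_abs]
      calc |⟪X ω, w⟫| * ‖X ω‖ ≤ (‖X ω‖ * ‖w‖) * ‖X ω‖ := by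
            gcongr; exact abs_real_inner_le_norm _ _
        _ = ‖w‖ * ‖X ω‖ ^ 2 := by ring
    calc ∫ ω, f i ω ∂P = ∫ ω, ⟪S (b i), ⟪X ω, w⟫ • X ω⟫ ∂P := by
          exact integral_congr_ae (Filter.Eventually.of_forall h1)
      _ = ⟪S (b i), ∫ ω, ⟪X ω, w⟫ • X ω ∂P⟫ := integral_inner hint _
      _ = ⟪S (b i), C w⟫ := by rw [← hC]
      _ = ⟪b i, Λ (R (b i))⟫ := by
          rw [hSsym, hΛ]
          simp [hw]
  -- the main second-moment computation
  have hmain : ∫ ω, ‖Rhalf (S (X ω))‖ ^ 2 ∂P = ∑' i, ⟪b i, Λ (R (b i))⟫ := by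
    calc ∫ ω, ‖Rhalf (S (X ω))‖ ^ 2 ∂P = ∫ ω, ∑' i, f i ω ∂P :=
          integral_congr_ae (Filter.Eventually.of_forall hptg)
      _ = ∑' i, ∫ ω, f i ω ∂P := integral_tsum hf_meas hsum_ne_top
      _ = ∑' i, ⟪b i, Λ (R (b i))⟫ := tsum_congr hterm
  -- pointwise rewrite of the integrand
  have hpt : ∀ ω, ‖Rhalf (S (Y ω • X ω - ⟪X ω, βstar⟫ • X ω))‖ ^ 2
      = ε ω ^ 2 * ‖Rhalf (S (X ω))‖ ^ 2 := by
    intro ω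
    have h1 : Y ω • X ω - ⟪X ω, βstar⟫ • X ω = ε ω • X ω := by
      rw [hY ω, ← sub_smul, add_sub_cancel_left]
    rw [h1, _root_.map_smul, _root_.map_smul, norm_smul, mul_pow, Real.norm_eq_abs, sq_abs]
  -- independence step
  have hmeasg : Measurable fun x : E => ‖Rhalf (S x)‖ ^ 2 :=
    ((Rhalf.continuous.comp S.continuous).norm.measurable.pow_const 2)
  have hcomp : IndepFun (fun ω => ε ω ^ 2) (fun ω => ‖Rhalf (S (X ω))‖ ^ 2) P :=
    hindep.comp (φ := fun r : ℝ => r ^ 2) (ψ := fun x : E => ‖Rhalf (S x)‖ ^ 2)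
      (measurable_id.pow_const 2) hmeasg
  have hmul : ∫ ω, ε ω ^ 2 * ‖Rhalf (S (X ω))‖ ^ 2 ∂P
      = (∫ ω, ε ω ^ 2 ∂P) * ∫ ω, ‖Rhalf (S (X ω))‖ ^ 2 ∂P :=
    hcomp.integral_fun_mul_eq_mul_integral ((hε.pow_const 2).aestronglyMeasurable)
      ((hmeasg.comp hX).aestronglyMeasurable)
  calc ∫ ω, ‖Rhalf (S (Y ω • X ω - ⟪X ω, βstar⟫ • X ω))‖ ^ 2 ∂P
      = ∫ ω, ε ω ^ 2 * ‖Rhalf (S (X ω))‖ ^ 2 ∂P :=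
        integral_congr_ae (Filter.Eventually.of_forall hpt)
    _ = (∫ ω, ε ω ^ 2 ∂P) * ∫ ω, ‖Rhalf (S (X ω))‖ ^ 2 ∂P := hmul
    _ = σ ^ 2 * ∑' i, ⟪b i, Λ (R (b i))⟫ := by rw [hεvar, hmain]
end

section
/- Let T and C be positive self-adjoint operators on L²(S) that commute, with common eigenfunctions φ_i and eigenvalues μ_i ≍ i^{-t}, ξ_i ≍ i^{-c} (t, c > 1). Then for all λ ∈ (0,1], ‖T^{1/2}(TC + λI)^{-1/2}‖ ≲ λ^{-c/(2(t+c))}. -/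
open scoped RealInnerProductSpace

set_option maxHeartbeats 2000000 in
/-- Let `T, C` be commuting positive compact self-adjoint operators on `L²(S)` with common
eigenfunctions `φ_i` and eigenvalues `μ_i ≍ i^{-t}`, `ξ_i ≍ i^{-c}` (`t, c > 1`). With
`S = T^{1/2}` the positive square root of `T` and `W = (TC + λI)^{-1/2}` the positive
inverse square root, one has `‖T^{1/2}(TC + λI)^{-1/2}‖ ≲ λ^{-c/(2(t+c))}` for `λ ∈ (0,1]`. -/
theorem stmt_15 {E : Type*}
    [NormedAddCommGroup E] [InnerProductSpace ℝ E] [CompleteSpace E]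
    (T C : E →L[ℝ] E) (φ : HilbertBasis ℕ ℝ E)
    (μ ξ : ℕ → ℝ) (t c c₁ c₂ : ℝ) (ht : 1 < t) (hc : 1 < c) (hc₁ : 0 < c₁) (hc₁₂ : c₁ ≤ c₂)
    (hμ : ∀ i : ℕ, c₁ * ((i : ℝ) + 1) ^ (-t) ≤ μ i ∧ μ i ≤ c₂ * ((i : ℝ) + 1) ^ (-t))
    (hξ : ∀ i : ℕ, c₁ * ((i : ℝ) + 1) ^ (-c) ≤ ξ i ∧ ξ i ≤ c₂ * ((i : ℝ) + 1) ^ (-c))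
    (hTφ : ∀ i, T (φ i) = μ i • φ i) (hCφ : ∀ i, C (φ i) = ξ i • φ i)
    (hTpos : T.IsPositive) (hCpos : C.IsPositive)
    (hTcpt : IsCompactOperator T) (hCcpt : IsCompactOperator C)
    (hcomm : T ∘L C = C ∘L T)
    (S : E →L[ℝ] E) (hS : S.IsPositive) (hSS : S ∘L S = T) :
    ∃ K : ℝ, 0 < K ∧ ∀ lam : ℝ, 0 < lam → lam ≤ 1 →
      ∀ W : E →L[ℝ] E, W.IsPositive →
        (W * W) * (T ∘L C + lam • 1) = 1 → (T ∘L C + lam • 1) * (W * W) = 1 →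
        ‖S ∘L W‖ ≤ K * lam ^ (-c / (2 * (t + c))) := by
  have htc : 0 < t + c := by linarith
  have hc₂ : 0 < c₂ := lt_of_lt_of_le hc₁ hc₁₂
  set a : ℝ := c / (t + c) with ha_def
  have ha0 : 0 < a := div_pos (by linarith) htc
  have ha1 : a < 1 := (div_lt_one htc).2 (by linarith)
  set K₀ : ℝ := (c₂ ^ 2 + 1) * (c₁⁻¹ + c₁⁻¹ ^ 2 + 1) with hK₀def
  have hK₀pos : 0 < K₀ := by positivity
  refine ⟨Real.sqrt K₀, Real.sqrt_pos.2 hK₀pos, ?_⟩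
  intro lam hlam hlam1 W hW h1 h2
  set A : E →L[ℝ] E := T ∘L C + lam • 1 with hAdef
  set M : ℝ := K₀ * lam ^ (-a) with hMdef
  have hlampow : (0:ℝ) < lam ^ (-a) := Real.rpow_pos_of_pos hlam _
  have hMpos : 0 < M := mul_pos hK₀pos hlampow
  -- scalar key inequality
  have key : ∀ i : ℕ, μ i ≤ M * (μ i * ξ i + lam) := by
    intro i
    set n : ℝ := (i : ℝ) + 1 with hndef
    have hn1 : (1:ℝ) ≤ n := by
      rw [hndef]; have := Nat.cast_nonneg (α := ℝ) i; linarith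
    have hn0 : (0:ℝ) < n := by linarith
    set p : ℝ := n ^ (-t) with hpdef
    set q : ℝ := n ^ (-c) with hqdef
    have hp0 : 0 < p := Real.rpow_pos_of_pos hn0 _
    have hq0 : 0 < q := Real.rpow_pos_of_pos hn0 _
    have hpq : p * q = n ^ (-(t + c)) := by
      rw [hpdef, hqdef, ← Real.rpow_add hn0]; ring_nf
    have hμl : c₁ * p ≤ μ i := (hμ i).1
    have hμu : μ i ≤ c₂ * p := (hμ i).2
    have hξl : c₁ * q ≤ ξ i := (hξ i).1
    have hξu : ξ i ≤ c₂ * q := (hξ i).2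
    have hμpos : 0 < μ i := lt_of_lt_of_le (by positivity) hμl
    have hξpos : 0 < ξ i := lt_of_lt_of_le (by positivity) hξl
    rcases le_or_gt lam (μ i * ξ i) with hcase | hcase
    · -- lam ≤ μ ξ
      have h5 : lam ≤ c₂ ^ 2 * (p * q) := by nlinarith
      have hdiv : lam / c₂ ^ 2 ≤ p * q := by
        rw [div_le_iff₀ (by positivity)]; linarith [h5]
      have hqeq : (p * q) ^ a = q := by
        rw [hpq, ← Real.rpow_mul hn0.le]
        congr 1
        rw [ha_def]; field_simp
      have hqge : (lam / c₂ ^ 2) ^ a ≤ q := by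
        rw [← hqeq]
        exact Real.rpow_le_rpow (by positivity) hdiv ha0.le
      have hc2a : (c₂ ^ 2 : ℝ) ^ a ≤ c₂ ^ 2 + 1 := by
        rcases le_or_gt 1 c₂ with h | h
        · have : (c₂ ^ 2 : ℝ) ^ a ≤ (c₂ ^ 2 : ℝ) ^ (1:ℝ) :=
            Real.rpow_le_rpow_of_exponent_le (by nlinarith) ha1.le
          rw [Real.rpow_one] at this; linarith
        · have : (c₂ ^ 2 : ℝ) ^ a ≤ 1 :=
            Real.rpow_le_one (by positivity) (by nlinarith) ha0.le
          nlinarith [sq_nonneg c₂]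
      have hsplit : (lam / c₂ ^ 2) ^ a = lam ^ a / (c₂ ^ 2 : ℝ) ^ a :=
        Real.div_rpow hlam.le (by positivity : (0:ℝ) ≤ c₂ ^ 2) a
      have hpowmul : lam ^ (-a) * lam ^ a = 1 := by
        rw [← Real.rpow_add hlam]; simp
      -- 1 ≤ M * ξ i
      have hMξ : 1 ≤ M * ξ i := by
        have hq' : c₁ * (lam ^ a / (c₂ ^ 2 : ℝ) ^ a) ≤ ξ i := by
          rw [← hsplit]
          calc c₁ * (lam / c₂ ^ 2) ^ a ≤ c₁ * q := by
                exact mul_le_mul_of_nonneg_left hqge hc₁.le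
            _ ≤ ξ i := hξl
        have hca0 : (0:ℝ) < (c₂ ^ 2 : ℝ) ^ a := Real.rpow_pos_of_pos (by positivity) _
        have hK₀c₁ : (c₂ ^ 2 : ℝ) ^ a ≤ K₀ * c₁ := by
          have h7 : (c₂ ^ 2 + 1) * (c₁⁻¹ * c₁) ≤ K₀ * c₁ := by
            rw [hK₀def]
            nlinarith [mul_nonneg (mul_nonneg (by positivity : (0:ℝ) ≤ c₂ ^ 2 + 1) (by positivity : (0:ℝ) ≤ c₁⁻¹ ^ 2 + 1)) hc₁.le]
          rw [inv_mul_cancel₀ hc₁.ne', mul_one] at h7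
          linarith
        have hchain : K₀ * lam ^ (-a) * (c₁ * (lam ^ a / (c₂ ^ 2 : ℝ) ^ a)) =
            K₀ * c₁ / (c₂ ^ 2 : ℝ) ^ a := by
          field_simp
          nlinarith [hpowmul]
        have h8 : 1 ≤ K₀ * c₁ / (c₂ ^ 2 : ℝ) ^ a := by
          rw [le_div_iff₀ hca0]; linarith
        calc (1:ℝ) ≤ K₀ * c₁ / (c₂ ^ 2 : ℝ) ^ a := h8
          _ = M * (c₁ * (lam ^ a / (c₂ ^ 2 : ℝ) ^ a)) := by rw [hMdef, hchain]
          _ ≤ M * ξ i := mul_le_mul_of_nonneg_left hq' hMpos.le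
      nlinarith [mul_le_mul_of_nonneg_left hMξ hμpos.le]
    · -- μ ξ < lam
      have h5 : c₁ ^ 2 * (p * q) ≤ lam := by
        nlinarith [mul_le_mul hμl hξl (by positivity : (0:ℝ) ≤ c₁ * q) hμpos.le]
      have hdiv : p * q ≤ lam / c₁ ^ 2 := by
        rw [le_div_iff₀ (by positivity)]; linarith
      have hpeq : (p * q) ^ (1 - a) = p := by
        rw [hpq, ← Real.rpow_mul hn0.le]
        congr 1
        rw [ha_def]; field_simp; ring
      have hple : p ≤ (lam / c₁ ^ 2) ^ (1 - a) := by
        rw [← hpeq]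
        exact Real.rpow_le_rpow (by positivity) hdiv (by linarith)
      have hsplit : (lam / c₁ ^ 2) ^ (1 - a) = lam ^ (1 - a) * (c₁ ^ 2 : ℝ) ^ (-(1 - a)) := by
        rw [Real.div_rpow hlam.le (by positivity), Real.rpow_neg (by positivity), div_eq_mul_inv]
      have hc1a : (c₁ ^ 2 : ℝ) ^ (-(1 - a)) ≤ c₁⁻¹ ^ 2 + 1 := by
        rcases le_or_gt 1 c₁ with h | h
        · have : (c₁ ^ 2 : ℝ) ^ (-(1 - a)) ≤ 1 :=
            Real.rpow_le_one_of_one_le_of_nonpos (by nlinarith) (by linarith)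
          nlinarith [sq_nonneg c₁⁻¹]
        · have h9 : (c₁ ^ 2 : ℝ) ^ (-(1 - a)) ≤ (c₁ ^ 2 : ℝ) ^ (-(1:ℝ)) :=
            Real.rpow_le_rpow_of_exponent_ge (by positivity) (by nlinarith) (by linarith)
          rw [Real.rpow_neg_one] at h9
          have : (c₁ ^ 2 : ℝ)⁻¹ = c₁⁻¹ ^ 2 := by rw [inv_pow]
          rw [this] at h9; linarith
      have hlsplit : lam ^ (1 - a) = lam * lam ^ (-a) := by
        rw [show (1 - a : ℝ) = 1 + (-a) by ring, Real.rpow_add hlam, Real.rpow_one]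
      have hub : μ i ≤ c₂ * ((c₁⁻¹ ^ 2 + 1) * (lam * lam ^ (-a))) := by
        calc μ i ≤ c₂ * p := hμu
          _ ≤ c₂ * ((lam / c₁ ^ 2) ^ (1 - a)) := mul_le_mul_of_nonneg_left hple hc₂.le
          _ = c₂ * (lam ^ (1 - a) * (c₁ ^ 2 : ℝ) ^ (-(1 - a))) := by rw [hsplit]
          _ ≤ c₂ * ((c₁⁻¹ ^ 2 + 1) * (lam * lam ^ (-a))) := by
              rw [hlsplit]
              have hl0 : 0 ≤ lam * lam ^ (-a) := by positivity
              have := mul_le_mul_of_nonneg_left hc1a hl0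
              nlinarith [this]
      have hK : c₂ * (c₁⁻¹ ^ 2 + 1) ≤ K₀ := by
        rw [hK₀def]; nlinarith [sq_nonneg (c₂ - 1), inv_pos.2 hc₁, sq_nonneg c₁⁻¹]
      have : μ i ≤ M * lam := by
        rw [hMdef]
        calc μ i ≤ c₂ * ((c₁⁻¹ ^ 2 + 1) * (lam * lam ^ (-a))) := hub
          _ = c₂ * (c₁⁻¹ ^ 2 + 1) * (lam * lam ^ (-a)) := by ring
          _ ≤ K₀ * (lam * lam ^ (-a)) := mul_le_mul_of_nonneg_right hK (by positivity)
          _ = K₀ * lam ^ (-a) * lam := by ring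
      nlinarith [mul_nonneg hMpos.le (mul_pos hμpos hξpos).le]
  -- operator part
  have hTsa := hTpos.isSelfAdjoint
  have hSsa := hS.isSelfAdjoint
  have hWsa := hW.isSelfAdjoint
  have hWsym : ∀ u v : E, ⟪W u, v⟫ = ⟪u, W v⟫ := fun u v =>
    (ContinuousLinearMap.isSelfAdjoint_iff_isSymmetric.mp hWsa) u v
  have hSsym : ∀ u v : E, ⟪S u, v⟫ = ⟪u, S v⟫ := fun u v =>
    (ContinuousLinearMap.isSelfAdjoint_iff_isSymmetric.mp hSsa) u v
  have hAsa : IsSelfAdjoint A := by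
    have hTC : IsSelfAdjoint (T ∘L C) := by
      show star (T * C) = T * C
      rw [star_mul, hTpos.isSelfAdjoint.star_eq, hCpos.isSelfAdjoint.star_eq]
      exact hcomm.symm
    have hone : IsSelfAdjoint (1 : E →L[ℝ] E) := star_one _
    have hsm : IsSelfAdjoint ((lam : ℝ) • (1 : E →L[ℝ] E)) :=
      IsSelfAdjoint.smul (star_trivial lam) hone
    exact hTC.add hsm
  have hAφ : ∀ i, A (φ i) = (μ i * ξ i + lam) • φ i := by
    intro i
    rw [hAdef]
    simp only [ContinuousLinearMap.add_apply, ContinuousLinearMap.comp_apply, hCφ, map_smul,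
      hTφ, smul_smul, ContinuousLinearMap.smul_apply, ContinuousLinearMap.one_apply, add_smul]
    ring_nf
  -- positivity of diagonal operators
  have posB : ∀ (B : E →L[ℝ] E), IsSelfAdjoint B → ∀ (b : ℕ → ℝ),
      (∀ i, B (φ i) = b i • φ i) → (∀ i, 0 ≤ b i) → ∀ y : E, 0 ≤ ⟪B y, y⟫ := by
    intro B hB b hb hbnn y
    have hsym := ContinuousLinearMap.isSelfAdjoint_iff_isSymmetric.mp hB
    rw [← φ.tsum_inner_mul_inner (B y) y]
    refine tsum_nonneg fun i => ?_
    have h1' : ⟪B y, φ i⟫ = b i * ⟪y, φ i⟫ := by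
      have h2' := hsym y (φ i)
      simp only [ContinuousLinearMap.coe_coe] at h2'
      rw [h2', hb i, real_inner_smul_right]
    rw [h1', real_inner_comm (φ i) y]
    nlinarith [hbnn i, mul_self_nonneg (⟪y, φ i⟫ : ℝ), mul_self_nonneg (⟪φ i, y⟫ : ℝ)]
  have hTA : ∀ y : E, ⟪T y, y⟫ ≤ M * ⟪A y, y⟫ := by
    intro y
    have hBsa : IsSelfAdjoint (M • A - T) := (IsSelfAdjoint.smul (star_trivial M) hAsa).sub hTsa
    have hBφ : ∀ i, (M • A - T) (φ i) = (M * (μ i * ξ i + lam) - μ i) • φ i := by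
      intro i
      simp only [ContinuousLinearMap.sub_apply, ContinuousLinearMap.smul_apply, hAφ, hTφ,
        smul_smul, sub_smul]
    have hBnn : ∀ i, 0 ≤ M * (μ i * ξ i + lam) - μ i := fun i => sub_nonneg.2 (key i)
    have := posB (M • A - T) hBsa _ hBφ hBnn y
    rw [ContinuousLinearMap.sub_apply, ContinuousLinearMap.smul_apply, inner_sub_left,
      real_inner_smul_left] at this
    linarith
  -- W A W = 1
  have hAW : A * W = W * A := by
    have e1 : A * W * (W * W) = W := by
      rw [mul_assoc, ← mul_assoc W W W, ← mul_assoc A, h2, one_mul]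
    conv_lhs => rw [← mul_one (A * W), ← h1, ← mul_assoc, e1]
  have hWAW : W * (A * W) = 1 := by rw [hAW, ← mul_assoc, h1]
  have hAWW : ∀ x : E, ⟪A (W x), W x⟫ = ⟪x, x⟫ := by
    intro x
    rw [real_inner_comm, hWsym x (A (W x))]
    have : W (A (W x)) = x := by
      have := congrArg (fun (U : E →L[ℝ] E) => U x) hWAW
      simpa [ContinuousLinearMap.mul_apply] using this
    rw [this]
  -- conclude
  refine ContinuousLinearMap.opNorm_le_bound _ (by positivity) fun x => ?_
  have hnorm : ‖(S ∘L W) x‖ ^ 2 = ⟪T (W x), W x⟫ := by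
    rw [ContinuousLinearMap.comp_apply, ← real_inner_self_eq_norm_sq, hSsym (W x) (S (W x)),
      real_inner_comm]
    congr 1
    rw [← hSS, ContinuousLinearMap.comp_apply]
  have hbound : ‖(S ∘L W) x‖ ^ 2 ≤ M * ‖x‖ ^ 2 := by
    rw [hnorm]
    calc ⟪T (W x), W x⟫ ≤ M * ⟪A (W x), W x⟫ := hTA (W x)
      _ = M * ⟪x, x⟫ := by rw [hAWW]
      _ = M * ‖x‖ ^ 2 := by rw [real_inner_self_eq_norm_sq]
  have hfin : ‖(S ∘L W) x‖ ≤ Real.sqrt M * ‖x‖ := by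
    have h3 : ‖(S ∘L W) x‖ = Real.sqrt (‖(S ∘L W) x‖ ^ 2) := (Real.sqrt_sq (norm_nonneg _)).symm
    rw [h3]
    calc Real.sqrt (‖(S ∘L W) x‖ ^ 2) ≤ Real.sqrt (M * ‖x‖ ^ 2) := Real.sqrt_le_sqrt hbound
      _ = Real.sqrt M * ‖x‖ := by
          rw [Real.sqrt_mul hMpos.le, Real.sqrt_sq (norm_nonneg x)]
  have hsq : Real.sqrt M = Real.sqrt K₀ * lam ^ (-c / (2 * (t + c))) := by
    rw [hMdef, Real.sqrt_mul hK₀pos.le]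
    congr 1
    rw [Real.sqrt_eq_rpow, ← Real.rpow_mul hlam.le,
      show (-a) * (1 / 2 : ℝ) = -c / (2 * (t + c)) from by rw [ha_def, neg_mul, neg_div, neg_inj, div_mul_div_comm, mul_one, mul_comm (t + c) 2]]
  rw [← hsq]
  exact hfin
end
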